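/- Relativized confluence of CAU⁻σ: if M reduces (in CAU⁻σ) to N and to R, and the στ-normal forms στ(N) and στ(R) are joinable in CAU⁻ (i.e., there exists S with στ(N) ↠ S and στ(R) ↠ S in CAU⁻), then N and R are joinable in CAU⁻σ. -/

import Mathlib

namespace CAU

/-! ## CAU⁻ syntax (de Bruijn, pure: no explicit operators) -/

/-- Trails of CAU⁻. -/
inductive NTr : Type
  | r : NTr
  | t : NTr → NTr → NTr
  | pb : NTr                      -- β
  | pbb : NTr                     -- β!
  | ti : NTr
  | lam : NTr → NTr
  | ap : NTr → NTr → NTr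
  | lets : NTr → NTr → NTr
  | tb : (Fin 9 → NTr) → NTr
  deriving Inhabited

/-- Terms of CAU⁻ (de Bruijn indices). -/
inductive NTm : Type
  | var : ℕ → NTm
  | lam : NTm → NTm
  | ap : NTm → NTm → NTm
  | lets : NTm → NTm → NTm
  | bang : NTr → NTm → NTm
  | ann : NTr → NTm → NTm         -- q ▷ M
  | insp : (Fin 9 → NTm) → NTm    -- ι(ϑ)
  deriving Inhabited

/-- Permutation (τ) reduction on CAU⁻ trails, closed under arbitrary contexts. -/
inductive TStepQ : NTr → NTr → Prop
  | tReflR (q) : TStepQ (.t q .r) q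
  | tReflL (q) : TStepQ (.t .r q) q
  | tbRefl : TStepQ (.tb fun _ => .r) .r
  | apRefl : TStepQ (.ap .r .r) .r
  | lamRefl : TStepQ (.lam .r) .r
  | letsRefl : TStepQ (.lets .r .r) .r
  | tAssoc (q₁ q₂ q₃) : TStepQ (.t (.t q₁ q₂) q₃) (.t q₁ (.t q₂ q₃))
  | tLam (q q') : TStepQ (.t (.lam q) (.lam q')) (.lam (.t q q'))
  | tLamT (q₁ q₁' q) :
      TStepQ (.t (.lam q₁) (.t (.lam q₁') q)) (.t (.lam (.t q₁ q₁')) q)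
  | tAp (q₁ q₂ q₁' q₂') :
      TStepQ (.t (.ap q₁ q₂) (.ap q₁' q₂')) (.ap (.t q₁ q₁') (.t q₂ q₂'))
  | tApT (q₁ q₂ q₁' q₂' q) :
      TStepQ (.t (.ap q₁ q₂) (.t (.ap q₁' q₂') q)) (.t (.ap (.t q₁ q₁') (.t q₂ q₂')) q)
  | tLets (q₁ q₂ q₁' q₂') :
      TStepQ (.t (.lets q₁ q₂) (.lets q₁' q₂')) (.lets (.t q₁ q₁') (.t q₂ q₂'))
  | tLetsT (q₁ q₂ q₁' q₂' q) :
      TStepQ (.t (.lets q₁ q₂) (.t (.lets q₁' q₂') q)) (.t (.lets (.t q₁ q₁') (.t q₂ q₂')) q)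
  | tTb (ζ₁ ζ₂) : TStepQ (.t (.tb ζ₁) (.tb ζ₂)) (.tb fun i => .t (ζ₁ i) (ζ₂ i))
  | tTbT (ζ₁ ζ₂ q) :
      TStepQ (.t (.tb ζ₁) (.t (.tb ζ₂) q)) (.t (.tb fun i => .t (ζ₁ i) (ζ₂ i)) q)
  | tL {q q''} (q') : TStepQ q q'' → TStepQ (.t q q') (.t q'' q')
  | tR {q' q''} (q) : TStepQ q' q'' → TStepQ (.t q q') (.t q q'')
  | lamC {q q'} : TStepQ q q' → TStepQ (.lam q) (.lam q')
  | apL {q q''} (q') : TStepQ q q'' → TStepQ (.ap q q') (.ap q'' q')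
  | apR {q' q''} (q) : TStepQ q' q'' → TStepQ (.ap q q') (.ap q q'')
  | letsL {q q''} (q') : TStepQ q q'' → TStepQ (.lets q q') (.lets q'' q')
  | letsR {q' q''} (q) : TStepQ q' q'' → TStepQ (.lets q q') (.lets q q'')
  | tbC {ζ} (i : Fin 9) {q'} : TStepQ (ζ i) q' →
      TStepQ (.tb ζ) (.tb (Function.update ζ i q'))

/-- Permutation (τ) reduction on CAU⁻ terms, closed under arbitrary contexts. -/
inductive TStepN : NTm → NTm → Prop
  | annRefl (M) : TStepN (.ann .r M) M
  | annAnn (q q' M) : TStepN (.ann q (.ann q' M)) (.ann (.t q q') M)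
  | bangAnn (q q' M) : TStepN (.bang q (.ann q' M)) (.bang (.t q q') M)
  | lamAnn (q M) : TStepN (.lam (.ann q M)) (.ann (.lam q) (.lam M))
  | apAnnL (q M N) : TStepN (.ap (.ann q M) N) (.ann (.ap q .r) (.ap M N))
  | apAnnR (q M N) : TStepN (.ap M (.ann q N)) (.ann (.ap .r q) (.ap M N))
  | letsAnnL (q M N) : TStepN (.lets (.ann q M) N) (.ann (.lets q .r) (.lets M N))
  | letsAnnR (q M N) : TStepN (.lets M (.ann q N)) (.ann (.lets .r q) (.lets M N))
  | inspAnn (ϑ : Fin 9 → NTm) (i : Fin 9) (q M) : ϑ i = .ann q M →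
      TStepN (.insp ϑ)
        (.ann (.tb (Function.update (fun _ => NTr.r) i q)) (.insp (Function.update ϑ i M)))
  | lamC {M M'} : TStepN M M' → TStepN (.lam M) (.lam M')
  | apL {M M'} (N) : TStepN M M' → TStepN (.ap M N) (.ap M' N)
  | apR {N N'} (M) : TStepN N N' → TStepN (.ap M N) (.ap M N')
  | letsL {M M'} (N) : TStepN M M' → TStepN (.lets M N) (.lets M' N)
  | letsR {N N'} (M) : TStepN N N' → TStepN (.lets M N) (.lets M N')
  | bangQ {q q'} (M) : TStepQ q q' → TStepN (.bang q M) (.bang q' M)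
  | bangM {M M'} (q) : TStepN M M' → TStepN (.bang q M) (.bang q M')
  | annQ {q q'} (M) : TStepQ q q' → TStepN (.ann q M) (.ann q' M)
  | annM {M M'} (q) : TStepN M M' → TStepN (.ann q M) (.ann q M')
  | inspC {ϑ} (i : Fin 9) {M'} : TStepN (ϑ i) M' →
      TStepN (.insp ϑ) (.insp (Function.update ϑ i M'))

end CAU

/-! ## CAU⁻σ syntax: explicit substitutions and explicit trail projections -/

namespace CAU

mutual
  /-- Terms of CAU⁻σ. -/
  inductive Tm : Type
    | one : Tm                               -- de Bruijn index 1
    | lam : Tm → Tm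
    | ap : Tm → Tm → Tm
    | lets : Tm → Tm → Tm
    | bang : Tr → Tm → Tm
    | ann : Tr → Tm → Tm                     -- q ▷ M
    | insp : (Fin 9 → Tm) → Tm               -- ι(ϑ)
    | sub : Tm → Sb → Tm                     -- closure M[s]
    | er : Tm → Tm                           -- explicit trail erasure ⌊M⌋
  /-- Trails of CAU⁻σ. -/
  inductive Tr : Type
    | r : Tr
    | t : Tr → Tr → Tr
    | pb : Tr                                -- β
    | pbb : Tr                               -- β!
    | ti : Tr
    | lam : Tr → Tr
    | ap : Tr → Tr → Tr
    | lets : Tr → Tr → Tr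
    | tb : (Fin 9 → Tr) → Tr
    | ext : Tm → Tr                          -- explicit trail extraction ⌈M⌉
  /-- Explicit substitutions of CAU⁻σ. -/
  inductive Sb : Type
    | id : Sb                                -- ⟨⟩
    | sh : Sb                                -- ↑
    | cons : Tm → Sb → Sb                    -- M · s
    | comp : Sb → Sb → Sb                    -- s ∘ t
end

instance : Inhabited Tm := ⟨Tm.one⟩
instance : Inhabited Tr := ⟨Tr.r⟩
instance : Inhabited Sb := ⟨Sb.id⟩

/-- `pow n` is the iterated lift `↑^(n+1)`. -/
def pow : ℕ → Sb
  | 0 => .sh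
  | n + 1 => .comp .sh (pow n)

mutual
  /-- σ∪τ one-step reduction on CAU⁻σ terms (closed under arbitrary contexts). -/
  inductive StepT : Tm → Tm → Prop
    -- σ-rules for explicit substitutions
    | subOneId : StepT (.sub .one .id) .one
    | subOneCons (M s) : StepT (.sub .one (.cons M s)) M
    | subLam (M s) : StepT (.sub (.lam M) s) (.lam (.sub M (.cons .one (.comp s .sh))))
    | subAp (M N s) : StepT (.sub (.ap M N) s) (.ap (.sub M s) (.sub N s))
    | subBang (q M s) : StepT (.sub (.bang q M) s) (.bang q (.sub M s))
    | subLets (M N s) :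
        StepT (.sub (.lets M N) s) (.lets (.sub M s) (.sub N (.cons .one (.comp s .sh))))
    | subAnn (q M s) : StepT (.sub (.ann q M) s) (.ann q (.sub M s))
    | subInsp (ϑ s) : StepT (.sub (.insp ϑ) s) (.insp fun i => .sub (ϑ i) s)
    | subSub (M s t) : StepT (.sub (.sub M s) t) (.sub M (.comp s t))
    -- σ-rules for explicit trail erasure
    | erOne : StepT (.er .one) .one
    | erOneSh (n) : StepT (.er (.sub .one (pow n))) (.sub .one (pow n))
    | erLam (M) : StepT (.er (.lam M)) (.lam (.er M))
    | erAp (M N) : StepT (.er (.ap M N)) (.ap (.er M) (.er N))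
    | erBang (q M) : StepT (.er (.bang q M)) (.bang q M)
    | erLets (M N) : StepT (.er (.lets M N)) (.lets (.er M) (.er N))
    | erAnn (q M) : StepT (.er (.ann q M)) (.er M)
    | erInsp (ϑ) : StepT (.er (.insp ϑ)) (.insp fun i => .er (ϑ i))
    -- τ-rules on terms
    | annRefl (M) : StepT (.ann .r M) M
    | annAnn (q q' M) : StepT (.ann q (.ann q' M)) (.ann (.t q q') M)
    | bangAnn (q q' M) : StepT (.bang q (.ann q' M)) (.bang (.t q q') M)
    | lamAnn (q M) : StepT (.lam (.ann q M)) (.ann (.lam q) (.lam M))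
    | apAnnL (q M N) : StepT (.ap (.ann q M) N) (.ann (.ap q .r) (.ap M N))
    | apAnnR (q M N) : StepT (.ap M (.ann q N)) (.ann (.ap .r q) (.ap M N))
    | letsAnnL (q M N) : StepT (.lets (.ann q M) N) (.ann (.lets q .r) (.lets M N))
    | letsAnnR (q M N) : StepT (.lets M (.ann q N)) (.ann (.lets .r q) (.lets M N))
    | inspAnn (ϑ : Fin 9 → Tm) (i : Fin 9) (q M) : ϑ i = .ann q M →
        StepT (.insp ϑ)
          (.ann (.tb (Function.update (fun _ => Tr.r) i q)) (.insp (Function.update ϑ i M)))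
    -- congruence closure
    | lamC {M M'} : StepT M M' → StepT (.lam M) (.lam M')
    | apL {M M'} (N) : StepT M M' → StepT (.ap M N) (.ap M' N)
    | apR {N N'} (M) : StepT N N' → StepT (.ap M N) (.ap M N')
    | letsL {M M'} (N) : StepT M M' → StepT (.lets M N) (.lets M' N)
    | letsR {N N'} (M) : StepT N N' → StepT (.lets M N) (.lets M N')
    | bangQ {q q'} (M) : StepQ q q' → StepT (.bang q M) (.bang q' M)
    | bangM {M M'} (q) : StepT M M' → StepT (.bang q M) (.bang q M')
    | annQ {q q'} (M) : StepQ q q' → StepT (.ann q M) (.ann q' M)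
    | annM {M M'} (q) : StepT M M' → StepT (.ann q M) (.ann q M')
    | inspC {ϑ} (i : Fin 9) {M'} : StepT (ϑ i) M' →
        StepT (.insp ϑ) (.insp (Function.update ϑ i M'))
    | subM {M M'} (s) : StepT M M' → StepT (.sub M s) (.sub M' s)
    | subS {s s'} (M) : StepS s s' → StepT (.sub M s) (.sub M s')
    | erC {M M'} : StepT M M' → StepT (.er M) (.er M')
  /-- σ∪τ one-step reduction on CAU⁻σ trails. -/
  inductive StepQ : Tr → Tr → Prop
    -- σ-rules for explicit trail extraction
    | extOne : StepQ (.ext .one) .r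
    | extOneSh (n) : StepQ (.ext (.sub .one (pow n))) .r
    | extLam (M) : StepQ (.ext (.lam M)) (.lam (.ext M))
    | extAp (M N) : StepQ (.ext (.ap M N)) (.ap (.ext M) (.ext N))
    | extBang (q M) : StepQ (.ext (.bang q M)) .r
    | extLets (M N) : StepQ (.ext (.lets M N)) (.lets (.ext M) (.ext N))
    | extAnn (q M) : StepQ (.ext (.ann q M)) (.t q (.ext M))
    | extInsp (ϑ) : StepQ (.ext (.insp ϑ)) (.tb fun i => .ext (ϑ i))
    -- τ-rules on trails
    | tReflR (q) : StepQ (.t q .r) q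
    | tReflL (q) : StepQ (.t .r q) q
    | tbRefl : StepQ (.tb fun _ => .r) .r
    | apRefl : StepQ (.ap .r .r) .r
    | lamRefl : StepQ (.lam .r) .r
    | letsRefl : StepQ (.lets .r .r) .r
    | tAssoc (q₁ q₂ q₃) : StepQ (.t (.t q₁ q₂) q₃) (.t q₁ (.t q₂ q₃))
    | tLam (q q') : StepQ (.t (.lam q) (.lam q')) (.lam (.t q q'))
    | tLamT (q₁ q₁' q) :
        StepQ (.t (.lam q₁) (.t (.lam q₁') q)) (.t (.lam (.t q₁ q₁')) q)
    | tAp (q₁ q₂ q₁' q₂') :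
        StepQ (.t (.ap q₁ q₂) (.ap q₁' q₂')) (.ap (.t q₁ q₁') (.t q₂ q₂'))
    | tApT (q₁ q₂ q₁' q₂' q) :
        StepQ (.t (.ap q₁ q₂) (.t (.ap q₁' q₂') q)) (.t (.ap (.t q₁ q₁') (.t q₂ q₂')) q)
    | tLets (q₁ q₂ q₁' q₂') :
        StepQ (.t (.lets q₁ q₂) (.lets q₁' q₂')) (.lets (.t q₁ q₁') (.t q₂ q₂'))
    | tLetsT (q₁ q₂ q₁' q₂' q) :
        StepQ (.t (.lets q₁ q₂) (.t (.lets q₁' q₂') q)) (.t (.lets (.t q₁ q₁') (.t q₂ q₂')) q)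
    | tTb (ζ₁ ζ₂) : StepQ (.t (.tb ζ₁) (.tb ζ₂)) (.tb fun i => .t (ζ₁ i) (ζ₂ i))
    | tTbT (ζ₁ ζ₂ q) :
        StepQ (.t (.tb ζ₁) (.t (.tb ζ₂) q)) (.t (.tb fun i => .t (ζ₁ i) (ζ₂ i)) q)
    -- congruence closure
    | tL {q q''} (q') : StepQ q q'' → StepQ (.t q q') (.t q'' q')
    | tR {q' q''} (q) : StepQ q' q'' → StepQ (.t q q') (.t q q'')
    | lamC {q q'} : StepQ q q' → StepQ (.lam q) (.lam q')
    | apL {q q''} (q') : StepQ q q'' → StepQ (.ap q q') (.ap q'' q')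
    | apR {q' q''} (q) : StepQ q' q'' → StepQ (.ap q q') (.ap q q'')
    | letsL {q q''} (q') : StepQ q q'' → StepQ (.lets q q') (.lets q'' q')
    | letsR {q' q''} (q) : StepQ q' q'' → StepQ (.lets q q') (.lets q q'')
    | tbC {ζ} (i : Fin 9) {q'} : StepQ (ζ i) q' → StepQ (.tb ζ) (.tb (Function.update ζ i q'))
    | extC {M M'} : StepT M M' → StepQ (.ext M) (.ext M')
  /-- σ one-step reduction on CAU⁻σ substitutions. -/
  inductive StepS : Sb → Sb → Prop
    | idComp (s) : StepS (.comp .id s) s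
    | shId : StepS (.comp .sh .id) .sh
    | shCons (M s) : StepS (.comp .sh (.cons M s)) s
    | consComp (M s t) : StepS (.comp (.cons M s) t) (.cons (.sub M t) (.comp s t))
    | compAssoc (s₁ s₂ s₃) : StepS (.comp (.comp s₁ s₂) s₃) (.comp s₁ (.comp s₂ s₃))
    | consM {M M'} (s) : StepT M M' → StepS (.cons M s) (.cons M' s)
    | consS {s s'} (M) : StepS s s' → StepS (.cons M s) (.cons M s')
    | compL {s s''} (t) : StepS s s'' → StepS (.comp s t) (.comp s'' t)
    | compR {t t'} (s) : StepS t t' → StepS (.comp s t) (.comp s t')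
end

/-- στ-normal terms. -/
def NormalT (M : Tm) : Prop := ∀ N, ¬ StepT M N
/-- στ-normal trails. -/
def NormalQ (q : Tr) : Prop := ∀ q', ¬ StepQ q q'
/-- σ-normal substitutions. -/
def NormalS (s : Sb) : Prop := ∀ t, ¬ StepS s t

/-- `nf` is a στ-normal-form function for terms. -/
def IsNFT (nf : Tm → Tm) : Prop :=
  ∀ M, Relation.ReflTransGen StepT M (nf M) ∧ NormalT (nf M)
/-- `nfq` is a στ-normal-form function for trails. -/
def IsNFQ (nfq : Tr → Tr) : Prop :=
  ∀ q, Relation.ReflTransGen StepQ q (nfq q) ∧ NormalQ (nfq q)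
/-- `nfs` is a σ-normal-form function for substitutions. -/
def IsNFS (nfs : Sb → Sb) : Prop :=
  ∀ s, Relation.ReflTransGen StepS s (nfs s) ∧ NormalS (nfs s)

end CAU
namespace CAU

/-! ## Grammar of στ-normal forms -/

mutual
  /-- Grammar of στ-normal CAU⁻σ terms. -/
  inductive GTm : Tm → Prop
    | one : GTm .one
    | oneSh (n) : GTm (.sub .one (pow n))
    | lam {M} : GTm M → GTm (.lam M)
    | ap {M N} : GTm M → GTm N → GTm (.ap M N)
    | lets {M N} : GTm M → GTm N → GTm (.lets M N)
    | bang {q M} : GTr q → GTm M → GTm (.bang q M)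
    | ann {q M} : GTr q → GTm M → GTm (.ann q M)
    | insp {ϑ} : (∀ i, GTm (ϑ i)) → GTm (.insp ϑ)
  /-- Grammar of στ-normal CAU⁻σ trails. -/
  inductive GTr : Tr → Prop
    | r : GTr .r
    | t {q q'} : GTr q → GTr q' → GTr (.t q q')
    | pb : GTr .pb
    | pbb : GTr .pbb
    | ti : GTr .ti
    | lam {q} : GTr q → GTr (.lam q)
    | ap {q q'} : GTr q → GTr q' → GTr (.ap q q')
    | lets {q q'} : GTr q → GTr q' → GTr (.lets q q')
    | tb {ζ} : (∀ i, GTr (ζ i)) → GTr (.tb ζ)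
end

/-- Grammar of σ-normal CAU⁻σ substitutions. -/
inductive GSb : Sb → Prop
  | id : GSb .id
  | shn (n) : GSb (pow n)
  | cons {M s} : GTm M → GSb s → GSb (.cons M s)

/-! ## Focused forms and meta-level projections -/

/-- Meta-level trail erasure ⌊M⌋*, relative to a normal form function. -/
def metaErase (nf : Tm → Tm) (M : Tm) : Tm :=
  match nf M with
  | .ann _ M' => M'
  | N => N

/-- Meta-level trail extraction ⌈M⌉*, relative to a normal form function. -/
def metaExt (nf : Tm → Tm) (M : Tm) : Tr :=
  match nf M with
  | .ann q _ => q
  | _ => .r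

/-- The focused form ⟨M⟩ = ⌈M⌉* ▷ ⌊M⌋*. -/
def focusT (nf : Tm → Tm) (M : Tm) : Tm := .ann (metaExt nf M) (metaErase nf M)

/-- Focusing a σ-normal substitution pointwise. -/
def focusSb (nf : Tm → Tm) : Sb → Sb
  | .cons M s => .cons (focusT nf M) (focusSb nf s)
  | s => s

end CAU
namespace CAU

/-! ## Embedding pure (σ-normal) terms into CAU⁻σ -/

/-- Embedding of pure trails. -/
def toTr : NTr → Tr
  | .r => .r
  | .t q q' => .t (toTr q) (toTr q')
  | .pb => .pb
  | .pbb => .pbb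
  | .ti => .ti
  | .lam q => .lam (toTr q)
  | .ap q q' => .ap (toTr q) (toTr q')
  | .lets q q' => .lets (toTr q) (toTr q')
  | .tb ζ => .tb fun i => toTr (ζ i)

/-- Embedding of pure terms: de Bruijn index `var n` (0-based) becomes `1[↑ⁿ]`. -/
def toTm : NTm → Tm
  | .var 0 => .one
  | .var (n+1) => .sub .one (pow n)
  | .lam M => .lam (toTm M)
  | .ap M N => .ap (toTm M) (toTm N)
  | .lets M N => .lets (toTm M) (toTm N)
  | .bang q M => .bang (toTr q) (toTm M)
  | .ann q M => .ann (toTr q) (toTm M)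
  | .insp ϑ => .insp fun i => toTm (ϑ i)

/-- `shiftP p` is the substitution `↑ᵖ` (with `↑⁰ = ⟨⟩`). -/
def shiftP : ℕ → Sb
  | 0 => .id
  | n + 1 => pow n

/-- The substitution `N₁ · … · N_k · ↑ᵖ`. -/
def mkSub : List Tm → ℕ → Sb
  | [], p => shiftP p
  | M :: l, p => .cons M (mkSub l p)

/-! ## Meta-level substitution on pure terms -/

/-- Lift by one all free indices ≥ d. -/
def liftN (d : ℕ) : NTm → NTm
  | .var n => if n < d then .var n else .var (n + 1)
  | .lam M => .lam (liftN (d+1) M)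
  | .ap M N => .ap (liftN d M) (liftN d N)
  | .lets M N => .lets (liftN d M) (liftN d (N))
  | .bang q M => .bang q (liftN d M)
  | .ann q M => .ann q (liftN d M)
  | .insp ϑ => .insp fun i => liftN d (ϑ i)

/-- Meta-level simultaneous substitution `M{N⃗}ₚ` on pure terms. -/
def msubst : NTm → ℕ → List NTm → NTm
  | .var n, p, l => if h : n < l.length then l.get ⟨n, h⟩ else .var (n - l.length + p)
  | .lam M, p, l => .lam (msubst M (p+1) (.var 0 :: l.map (liftN 0)))
  | .ap M N, p, l => .ap (msubst M p l) (msubst N p l)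
  | .lets M N, p, l => .lets (msubst M p l) (msubst N (p+1) (.var 0 :: l.map (liftN 0)))
  | .bang q M, p, l => .bang q (msubst M p l)
  | .ann q M, p, l => .ann q (msubst M p l)
  | .insp ϑ, p, l => .insp fun i => msubst (ϑ i) p l

/-! ## Trail inspection: structural recursion qϑ over trails -/

/-- Structural recursion `qϑ` over a pure trail, applying the nine inspection branches. -/
def recTrailN : NTr → (Fin 9 → NTm) → NTm
  | .r, ϑ => ϑ 0
  | .t q q', ϑ => .ap (.ap (ϑ 1) (recTrailN q ϑ)) (recTrailN q' ϑ)
  | .pb, ϑ => ϑ 2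
  | .pbb, ϑ => ϑ 3
  | .ti, ϑ => ϑ 4
  | .lam q, ϑ => .ap (ϑ 5) (recTrailN q ϑ)
  | .ap q q', ϑ => .ap (.ap (ϑ 6) (recTrailN q ϑ)) (recTrailN q' ϑ)
  | .lets q q', ϑ => .ap (.ap (ϑ 7) (recTrailN q ϑ)) (recTrailN q' ϑ)
  | .tb ζ, ϑ => (List.ofFn fun i => recTrailN (ζ i) ϑ).foldl .ap (ϑ 8)

/-- Structural recursion `qϑ` over a CAU⁻σ trail (junk value on explicit extractions,
which cannot occur in the στ-normal trails it is applied to). -/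
def recTrailT : Tr → (Fin 9 → Tm) → Tm
  | .r, ϑ => ϑ 0
  | .t q q', ϑ => .ap (.ap (ϑ 1) (recTrailT q ϑ)) (recTrailT q' ϑ)
  | .pb, ϑ => ϑ 2
  | .pbb, ϑ => ϑ 3
  | .ti, ϑ => ϑ 4
  | .lam q, ϑ => .ap (ϑ 5) (recTrailT q ϑ)
  | .ap q q', ϑ => .ap (.ap (ϑ 6) (recTrailT q ϑ)) (recTrailT q' ϑ)
  | .lets q q', ϑ => .ap (.ap (ϑ 7) (recTrailT q ϑ)) (recTrailT q' ϑ)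
  | .tb ζ, ϑ => (List.ofFn fun i => recTrailT (ζ i) ϑ).foldl .ap (ϑ 8)
  | .ext _, ϑ => ϑ 0

/-! ## Meta-level β-reduction on pure (σ-normal) terms -/

/-- One inspection step in a bang-free context of a pure term:
some `ι(ϑ)` not guarded by a bang is replaced by `ti ▷ qϑ`. -/
inductive FInspN (q : NTr) : NTm → NTm → Prop
  | insp (ϑ) : FInspN q (.insp ϑ) (.ann .ti (recTrailN q ϑ))
  | lam {M M'} : FInspN q M M' → FInspN q (.lam M) (.lam M')
  | apL {M M'} (N) : FInspN q M M' → FInspN q (.ap M N) (.ap M' N)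
  | apR {N N'} (M) : FInspN q N N' → FInspN q (.ap M N) (.ap M N')
  | letsL {M M'} (N) : FInspN q M M' → FInspN q (.lets M N) (.lets M' N)
  | letsR {N N'} (M) : FInspN q N N' → FInspN q (.lets M N) (.lets M N')
  | ann {M M'} (q') : FInspN q M M' → FInspN q (.ann q' M) (.ann q' M')
  | inspC {ϑ} (i : Fin 9) {M'} : FInspN q (ϑ i) M' →
      FInspN q (.insp ϑ) (.insp (Function.update ϑ i M'))

/-- Meta-level β-reduction on pure (σ-normal) terms, closed under σ-normal contexts. -/
inductive BetaN : NTm → NTm → Prop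
  | beta (M N) : BetaN (.ap (.lam M) N) (.ann .pb (msubst M 0 [N]))
  | betaBang (q M N) : BetaN (.lets (.bang q M) N) (.ann .pbb (msubst N 0 [.ann q M]))
  | insp {q M M'} : FInspN q M M' → BetaN (.bang q M) (.bang q M')
  | lam {M M'} : BetaN M M' → BetaN (.lam M) (.lam M')
  | apL {M M'} (N) : BetaN M M' → BetaN (.ap M N) (.ap M' N)
  | apR {N N'} (M) : BetaN N N' → BetaN (.ap M N) (.ap M N')
  | letsL {M M'} (N) : BetaN M M' → BetaN (.lets M N) (.lets M' N)
  | letsR {N N'} (M) : BetaN N N' → BetaN (.lets M N) (.lets M N')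
  | bang {M M'} (q) : BetaN M M' → BetaN (.bang q M) (.bang q M')
  | ann {M M'} (q) : BetaN M M' → BetaN (.ann q M) (.ann q M')
  | inspC {ϑ} (i : Fin 9) {M'} : BetaN (ϑ i) M' →
      BetaN (.insp ϑ) (.insp (Function.update ϑ i M'))

/-! ## Lazy Beta-reduction of CAU⁻σ -/

/-- One inspection step in a context whose hole is not inside a bang, a substitution,
or an erasure: some `ι(ϑ)` is replaced by `ti ▷ qϑ`. -/
inductive FInspT (q : Tr) : Tm → Tm → Prop
  | insp (ϑ) : FInspT q (.insp ϑ) (.ann .ti (recTrailT q ϑ))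
  | lam {M M'} : FInspT q M M' → FInspT q (.lam M) (.lam M')
  | apL {M M'} (N) : FInspT q M M' → FInspT q (.ap M N) (.ap M' N)
  | apR {N N'} (M) : FInspT q N N' → FInspT q (.ap M N) (.ap M N')
  | letsL {M M'} (N) : FInspT q M M' → FInspT q (.lets M N) (.lets M' N)
  | letsR {N N'} (M) : FInspT q N N' → FInspT q (.lets M N) (.lets M N')
  | ann {M M'} (q') : FInspT q M M' → FInspT q (.ann q' M) (.ann q' M')
  | inspC {ϑ} (i : Fin 9) {M'} : FInspT q (ϑ i) M' →
      FInspT q (.insp ϑ) (.insp (Function.update ϑ i M'))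

mutual
  /-- The lazy Beta-relation of CAU⁻σ (relative to a normal form function `nfq`
  for trails, used in the trail inspection rule), closed under evaluation contexts
  `E_σ` whose hole does not occur inside an erasure. -/
  inductive LBeta (nfq : Tr → Tr) : Tm → Tm → Prop
    | beta (M N) :
        LBeta nfq (.ap (.lam M) N)
          (.ann (.t (.ap (.lam (.ext M)) (.ext N)) .pb) (.sub (.er M) (.cons (.er N) .id)))
    | betaBang (q M N) :
        LBeta nfq (.lets (.bang q M) N)
          (.ann (.t (.lets .r (.ext N)) .pbb) (.sub (.er N) (.cons (.ann q M) .id)))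
    | insp {q M M'} : FInspT (nfq (.t q (.ext M))) M M' →
        LBeta nfq (.bang q M) (.bang q M')
    | lam {M M'} : LBeta nfq M M' → LBeta nfq (.lam M) (.lam M')
    | apL {M M'} (N) : LBeta nfq M M' → LBeta nfq (.ap M N) (.ap M' N)
    | apR {N N'} (M) : LBeta nfq N N' → LBeta nfq (.ap M N) (.ap M N')
    | letsL {M M'} (N) : LBeta nfq M M' → LBeta nfq (.lets M N) (.lets M' N)
    | letsR {N N'} (M) : LBeta nfq N N' → LBeta nfq (.lets M N) (.lets M N')
    | bang {M M'} (q) : LBeta nfq M M' → LBeta nfq (.bang q M) (.bang q M')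
    | ann {M M'} (q) : LBeta nfq M M' → LBeta nfq (.ann q M) (.ann q M')
    | inspC {ϑ} (i : Fin 9) {M'} : LBeta nfq (ϑ i) M' →
        LBeta nfq (.insp ϑ) (.insp (Function.update ϑ i M'))
    | subM {M M'} (s) : LBeta nfq M M' → LBeta nfq (.sub M s) (.sub M' s)
    | subS {s s'} (M) : LBetaSub nfq s s' → LBeta nfq (.sub M s) (.sub M s')
  /-- Lazy Beta-reduction inside substitutions. -/
  inductive LBetaSub (nfq : Tr → Tr) : Sb → Sb → Prop
    | consM {M M'} (s) : LBeta nfq M M' → LBetaSub nfq (.cons M s) (.cons M' s)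
    | consS {s s'} (M) : LBetaSub nfq s s' → LBetaSub nfq (.cons M s) (.cons M s')
    | compL {s s''} (t) : LBetaSub nfq s s'' → LBetaSub nfq (.comp s t) (.comp s'' t)
    | compR {t t'} (s) : LBetaSub nfq t t' → LBetaSub nfq (.comp s t) (.comp s t')
end

/-- CAU⁻σ reduction: the union of Beta-reduction and στ-equivalence. -/
def SRed (nfq : Tr → Tr) (M N : Tm) : Prop :=
  LBeta nfq M N ∨ Relation.EqvGen StepT M N

/-! ## Naive (eager) CAU⁻ reduction on στ-normal terms -/

/-- A principal contraction in the style of CAU⁻ (using an explicit substitution for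
the redex, to be normalized away immediately afterwards), closed under arbitrary
CAU⁻ contexts. -/
inductive NaiveBeta : Tm → Tm → Prop
  | beta (M N) : NaiveBeta (.ap (.lam M) N) (.ann .pb (.sub M (.cons N .id)))
  | betaBang (q M N) :
      NaiveBeta (.lets (.bang q M) N) (.ann .pbb (.sub N (.cons (.ann q M) .id)))
  | insp {q M M'} : FInspT q M M' → NaiveBeta (.bang q M) (.bang q M')
  | lam {M M'} : NaiveBeta M M' → NaiveBeta (.lam M) (.lam M')
  | apL {M M'} (N) : NaiveBeta M M' → NaiveBeta (.ap M N) (.ap M' N)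
  | apR {N N'} (M) : NaiveBeta N N' → NaiveBeta (.ap M N) (.ap M N')
  | letsL {M M'} (N) : NaiveBeta M M' → NaiveBeta (.lets M N) (.lets M' N)
  | letsR {N N'} (M) : NaiveBeta N N' → NaiveBeta (.lets M N) (.lets M N')
  | bang {M M'} (q) : NaiveBeta M M' → NaiveBeta (.bang q M) (.bang q M')
  | ann {M M'} (q) : NaiveBeta M M' → NaiveBeta (.ann q M) (.ann q M')
  | inspC {ϑ} (i : Fin 9) {M'} : NaiveBeta (ϑ i) M' →
      NaiveBeta (.insp ϑ) (.insp (Function.update ϑ i M'))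

/-- One step of CAU⁻ reduction: a principal contraction followed by normalization. -/
def CRed (nf : Tm → Tm) (M N : Tm) : Prop := ∃ R, NaiveBeta M R ∧ N = nf R

/-! ## The eager β̄-reduction on focused forms -/

/-- β̄-reduction: the relation on focused forms induced by meta-level β on pure terms. -/
def BbarT (nf : Tm → Tm) (A B : Tm) : Prop :=
  ∃ M N : NTm, BetaN M N ∧ A = focusT nf (toTm M) ∧ B = focusT nf (toTm N)

/-- Focusing of a σ-normal substitution `N⃗ · ↑ᵖ` given by a list of pure terms. -/
def focusNSub (nf : Tm → Tm) (l : List NTm) (p : ℕ) : Sb :=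
  mkSub (l.map fun M => focusT nf (toTm M)) p

/-- β̄-reduction on focused substitutions: one component β-reduces. -/
def BbarS (nf : Tm → Tm) (A B : Sb) : Prop :=
  ∃ (l : List NTm) (p : ℕ) (i : ℕ) (h : i < l.length) (N' : NTm),
    BetaN (l.get ⟨i, h⟩) N' ∧ A = focusNSub nf l p ∧ B = focusNSub nf (l.set i N') p

/-- One-hole σ-normal contexts over pure terms. -/
inductive NCtx : Type
  | hole : NCtx
  | lam : NCtx → NCtx
  | apL : NCtx → NTm → NCtx
  | apR : NTm → NCtx → NCtx
  | letsL : NCtx → NTm → NCtx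
  | letsR : NTm → NCtx → NCtx
  | bang : NTr → NCtx → NCtx
  | ann : NTr → NCtx → NCtx
  | insp : (Fin 9 → NTm) → Fin 9 → NCtx → NCtx

/-- Filling the hole of a σ-normal context. -/
def fillN : NCtx → NTm → NTm
  | .hole, X => X
  | .lam C, X => .lam (fillN C X)
  | .apL C N, X => .ap (fillN C X) N
  | .apR M C, X => .ap M (fillN C X)
  | .letsL C N, X => .lets (fillN C X) N
  | .letsR M C, X => .lets M (fillN C X)
  | .bang q C, X => .bang q (fillN C X)
  | .ann q C, X => .ann q (fillN C X)
  | .insp ϑ i C, X => .insp (Function.update ϑ i (fillN C X))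

end CAU
namespace CAU

/-! ## The call-by-value abstract machine -/

mutual
  /-- Machine closures. -/
  inductive Clo : Type
    | lamC : NTm → Env → Clo          -- ⌊(λM̂)[e]⌋
    | bangC : Tr → Clo → Clo          -- !_q C
  /-- Machine values `q ▷ C`. -/
  inductive Val : Type
    | mk : Tr → Clo → Val
  /-- Machine environments: lists of values. -/
  inductive Env : Type
    | nil : Env
    | cons : Val → Env → Env
end

instance : Inhabited Clo := ⟨.lamC (.var 0) .nil⟩
instance : Inhabited Val := ⟨.mk .r default⟩
instance : Inhabited Env := ⟨.nil⟩

/-- The trail of a value. -/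
def Val.tr : Val → Tr | .mk q _ => q
/-- The closure of a value. -/
def Val.clo : Val → Clo | .mk _ C => C

/-- Length of an environment. -/
def envLen : Env → ℕ
  | .nil => 0
  | .cons _ e => envLen e + 1

/-- Environment lookup `e(n)`, returning the n-th closure (0-based). -/
def lookupE : Env → ℕ → Option Clo
  | .cons (.mk _ C) _, 0 => some C
  | .cons _ e, n + 1 => lookupE e n
  | .nil, _ => none

mutual
  /-- The CAU⁻σ term denoted by a closure. -/
  def cloToTm : Clo → Tm
    | .lamC M e => .er (.sub (.lam (toTm M)) (envToSub e))
    | .bangC q C => .bang q (cloToTm C)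
  /-- The CAU⁻σ term denoted by a value. -/
  def valToTm : Val → Tm
    | .mk q C => .ann q (cloToTm C)
  /-- The explicit substitution denoted by an environment. -/
  def envToSub : Env → Sb
    | .nil => .id
    | .cons V e => .cons (valToTm V) (envToSub e)
end

/-- Pure terms closed below depth `d` (all free indices < d). -/
def closedN (d : ℕ) : NTm → Prop
  | .var n => n < d
  | .lam M => closedN (d+1) M
  | .ap M N => closedN d M ∧ closedN d N
  | .lets M N => closedN d M ∧ closedN (d+1) N
  | .bang _ M => closedN d M
  | .ann _ M => closedN d M
  | .insp ϑ => ∀ i, closedN d (ϑ i)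

mutual
  /-- Closed closures. -/
  def closedClo : Clo → Prop
    | .lamC M e => closedN (envLen e + 1) M ∧ closedEnv e
    | .bangC _ C => closedClo C
  /-- Closed values. -/
  def closedVal : Val → Prop
    | .mk _ C => closedClo C
  /-- Closed environments. -/
  def closedEnv : Env → Prop
    | .nil => True
    | .cons V e => closedVal V ∧ closedEnv e
end

/-- Machine codes: pure terms or fragments of abstract syntax tree. -/
inductive Code : Type
  | tm : NTm → Code
  | ap : Code
  | bg : Code
  | lt : NTm → Code
  | ins : Code

/-- Stack tuples `(q | κ | e)`. -/
structure Tup where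
  q : Tr
  κ : Code
  e : Env

instance : Inhabited Tup := ⟨⟨.r, .ap, .nil⟩⟩

/-- Stacks. -/
abbrev Stack := List Tup
/-- Dumps. -/
abbrev Dump := List Val
/-- Machine configurations. -/
abbrev Config := Stack × Dump

/-- The tuple for a pending inspection branch. -/
def brTup (x : Tr × NTm × Env) : Tup := ⟨x.1, .tm x.2.1, x.2.2⟩

mutual
  /-- Well-formed context configurations. -/
  inductive WfCtx : Stack → Dump → Prop
    | nil : WfCtx [] []
    | apTm {π D} (q q' M e) : WfCtx π D →
        WfCtx (⟨q, .tm M, e⟩ :: ⟨q', .ap, .nil⟩ :: π) D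
    | apVal {π D} (q V) : WfCtx π D → WfCtx (⟨q, .ap, .nil⟩ :: π) (V :: D)
    | lt {π D} (q M e) : WfCtx π D → WfCtx (⟨q, .lt M, e⟩ :: π) D
    | bg {π D} (q) : WfCtx π D → WfCtx (⟨q, .bg, .nil⟩ :: π) D
    | ins {π D} (q') (ts : List (Tr × NTm × Env)) (vs : List Val) :
        vs.length + ts.length = 8 → WfCtx π D →
        WfCtx (ts.map brTup ++ ⟨q', .ins, .nil⟩ :: π) (vs ++ D)
  /-- Well-formed term configurations. -/
  inductive WfTm : Stack → Dump → Prop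
    | fin (V) : WfTm [] [V]
    | tm {π D} (q M e) : WfCtx π D → WfTm (⟨q, .tm M, e⟩ :: π) D
    | ap {π D} (q V W) : WfCtx π D → WfTm (⟨q, .ap, .nil⟩ :: π) (W :: V :: D)
    | lt {π D} (q M e V) : WfCtx π D → WfTm (⟨q, .lt M, e⟩ :: π) (V :: D)
    | bg {π D} (q V) : WfCtx π D → WfTm (⟨q, .bg, .nil⟩ :: π) (V :: D)
    | ins {π D} (q) (vs : List Val) : vs.length = 9 → WfCtx π D →
        WfTm (⟨q, .ins, .nil⟩ :: π) (vs ++ D)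
end

/-- The term denoted by a pending-branch tuple. -/
def tupDen (x : Tr × NTm × Env) : Tm := .ann x.1 (.er (.sub (toTm x.2.1) (envToSub x.2.2)))

mutual
  /-- Denotation of context configurations as CAU⁻σ one-hole contexts. -/
  inductive CtxDen : Stack → Dump → (Tm → Tm) → Prop
    | nil : CtxDen [] [] id
    | apTm {π D E} (q q' M e) : CtxDen π D E →
        CtxDen (⟨q, .tm M, e⟩ :: ⟨q', .ap, .nil⟩ :: π) D
          (fun X => E (.ann q' (.ap X (.ann q (.er (.sub (toTm M) (envToSub e)))))))
    | apVal {π D E} (q V) : CtxDen π D E →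
        CtxDen (⟨q, .ap, .nil⟩ :: π) (V :: D) (fun X => E (.ann q (.ap (valToTm V) X)))
    | lt {π D E} (q N e) : CtxDen π D E →
        CtxDen (⟨q, .lt N, e⟩ :: π) D
          (fun X => E (.ann q (.lets X
            (.er (.sub (toTm N) (.cons .one (.comp (envToSub e) .sh)))))))
    | bg {π D E} (q) : CtxDen π D E →
        CtxDen (⟨q, .bg, .nil⟩ :: π) D (fun X => E (.ann q (.bang .r X)))
    | ins {π D E} (q') (ts : List (Tr × NTm × Env)) (vs : List Val) :
        vs.length + ts.length = 8 → CtxDen π D E →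
        CtxDen (ts.map brTup ++ ⟨q', .ins, .nil⟩ :: π) (vs ++ D)
          (fun X => E (.ann q' (.insp fun i =>
            if h : (i : ℕ) < vs.length then valToTm (vs.get ⟨i, h⟩)
            else if (i : ℕ) = vs.length then X
            else tupDen (ts.getD ((i : ℕ) - vs.length - 1) default))))
  /-- Denotation of term configurations as CAU⁻σ terms. -/
  inductive TmDen : Stack → Dump → Tm → Prop
    | fin (V) : TmDen [] [V] (valToTm V)
    | tm {π D E} (q M e) : CtxDen π D E →
        TmDen (⟨q, .tm M, e⟩ :: π) D (E (.ann q (.er (.sub (toTm M) (envToSub e)))))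
    | ap {π D E} (q V W) : CtxDen π D E →
        TmDen (⟨q, .ap, .nil⟩ :: π) (W :: V :: D) (E (.ann q (.ap (valToTm V) (valToTm W))))
    | lt {π D E} (q N e V) : CtxDen π D E →
        TmDen (⟨q, .lt N, e⟩ :: π) (V :: D)
          (E (.ann q (.lets (valToTm V)
            (.er (.sub (toTm N) (.cons .one (.comp (envToSub e) .sh)))))))
    | bg {π D E} (q V) : CtxDen π D E →
        TmDen (⟨q, .bg, .nil⟩ :: π) (V :: D) (E (.ann q (.bang .r (valToTm V))))
    | ins {π D E} (q) (vs : List Val) : vs.length = 9 → CtxDen π D E →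
        TmDen (⟨q, .ins, .nil⟩ :: π) (vs ++ D)
          (E (.ann q (.insp fun i => valToTm (vs.getD (i : ℕ) default))))
end

/-- The trail-collection operator `I(q_ϑ, π, D)` materializing the trail of the
enclosing bang for trail inspection. -/
inductive IRel (nfq : Tr → Tr) : Tr → Stack → Dump → Tr → Prop
  | bg {qθ π D} (q') : IRel nfq qθ (⟨q', .bg, .nil⟩ :: π) D (nfq qθ)
  | apTm {qθ π D res} (q q' M e) :
      IRel nfq (.t q' (.ap qθ q)) π D res →
      IRel nfq qθ (⟨q, .tm M, e⟩ :: ⟨q', .ap, .nil⟩ :: π) D res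
  | apVal {qθ π D res} (q q'' C) :
      IRel nfq (.t q (.ap q'' qθ)) π D res →
      IRel nfq qθ (⟨q, .ap, .nil⟩ :: π) (Val.mk q'' C :: D) res
  | lt {qθ π D res} (q N e) :
      IRel nfq (.t q (.lets qθ .r)) π D res →
      IRel nfq qθ (⟨q, .lt N, e⟩ :: π) D res
  | ins {qθ π D res} (q') (ts : List (Tr × NTm × Env)) (vs : List Val) :
      vs.length + ts.length = 8 →
      IRel nfq (.t q' (.tb fun i =>
          if h : (i : ℕ) < vs.length then (vs.get ⟨i, h⟩).tr
          else if (i : ℕ) = vs.length then qθ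
          else (ts.getD ((i : ℕ) - vs.length - 1) default).1)) π D res →
      IRel nfq qθ (ts.map brTup ++ ⟨q', .ins, .nil⟩ :: π) (vs ++ D) res

/-- The inspection trail of nine evaluated branches, as a term (de Bruijn encoding of
trail constructors as the dangling indices 1..9). -/
def tTT : Tr → NTm
  | .r => .var 0
  | .t q q' => .ap (.ap (.var 1) (tTT q)) (tTT q')
  | .pb => .var 2
  | .pbb => .var 3
  | .ti => .var 4
  | .lam q => .ap (.var 5) (tTT q)
  | .ap q q' => .ap (.ap (.var 6) (tTT q)) (tTT q')
  | .lets q q' => .ap (.ap (.var 7) (tTT q)) (tTT q')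
  | .tb ζ => (List.ofFn fun i => tTT (ζ i)).foldl .ap (.var 8)
  | .ext _ => .var 0

/-- The environment `[r ▷ C₁, …, r ▷ C₉]` of inspection branches. -/
def mkEnv (vs : List Val) : Env := vs.foldr (fun V e => .cons (.mk .r V.clo) e) .nil

/-- Transition relation of the call-by-value abstract machine. -/
inductive MStep (nfq : Tr → Tr) : Config → Config → Prop
  | r1 {π D} (q M N e) :
      MStep nfq (⟨q, .tm (.ap M N), e⟩ :: π, D)
        (⟨.r, .tm M, e⟩ :: ⟨.r, .tm N, e⟩ :: ⟨q, .ap, .nil⟩ :: π, D)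
  | r2 {π D} (q q' C q'' M e) :
      MStep nfq (⟨q, .ap, .nil⟩ :: π, Val.mk q' C :: Val.mk q'' (.lamC M e) :: D)
        (⟨.t q (.t (.ap q'' q') .pb), .tm M, .cons (.mk .r C) e⟩ :: π, D)
  | r3 {π D} (q M e) :
      MStep nfq (⟨q, .tm (.lam M), e⟩ :: π, D) (π, Val.mk q (.lamC M e) :: D)
  | r4 {π D} (q M N e) :
      MStep nfq (⟨q, .tm (.lets M N), e⟩ :: π, D)
        (⟨.r, .tm M, e⟩ :: ⟨q, .lt N, e⟩ :: π, D)
  | r5 {π D} (q N e q' V) :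
      MStep nfq (⟨q, .lt N, e⟩ :: π, Val.mk q' (.bangC V.tr V.clo) :: D)
        (⟨.t q (.t (.lets q' .r) (.t .pbb
            (.ext (.sub (.er (.sub (toTm N) (.cons .one (.comp (envToSub e) .sh))))
              (.cons (valToTm V) .id))))),
          .tm N, .cons V e⟩ :: π, D)
  | r6 {π D} (q q' M e) :
      MStep nfq (⟨q, .tm (.bang q' M), e⟩ :: π, D)
        (⟨.t (toTr q') (.ext (.sub (toTm M) (envToSub e))), .tm M, e⟩ :: ⟨q, .bg, .nil⟩ :: π, D)
  | r7 {π D} (q V) :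
      MStep nfq (⟨q, .bg, .nil⟩ :: π, V :: D) (π, Val.mk q (.bangC V.tr V.clo) :: D)
  | r8 {π D} (q ϑ e) :
      MStep nfq (⟨q, .tm (.insp ϑ), e⟩ :: π, D)
        ((List.ofFn fun i : Fin 9 => Tup.mk .r (.tm (ϑ i)) e) ++ ⟨q, .ins, .nil⟩ :: π, D)
  | r9 {π D} (q) (vs : List Val) (qres : Tr) :
      vs.length = 9 →
      IRel nfq (.t q (.tb fun i => (vs.getD (i : ℕ) default).tr)) π D qres →
      MStep nfq (⟨q, .ins, .nil⟩ :: π, vs ++ D)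
        (⟨.t q (.t (.tb fun i => (vs.getD (i : ℕ) default).tr) .ti),
          .tm (tTT qres), mkEnv vs⟩ :: π, D)
  | r10 {π D} (q n e C) :
      lookupE e n = some C →
      MStep nfq (⟨q, .tm (.var n), e⟩ :: π, D) (π, Val.mk q C :: D)

/-- Closedness conditions on stack tuples. -/
def TupClosed : Tup → Prop
  | ⟨_, .tm M, e⟩ => closedN (envLen e) M ∧ closedEnv e
  | ⟨_, .lt N, e⟩ => closedN (envLen e + 1) N ∧ closedEnv e
  | ⟨_, _, e⟩ => closedEnv e

/-- Valid machine states: well-formed term configurations whose tuples and dump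
values are closed. -/
def Valid (ς : Config) : Prop :=
  WfTm ς.1 ς.2 ∧ (∀ t ∈ ς.1, TupClosed t) ∧ (∀ V ∈ ς.2, closedVal V)

end CAU

/-!
A CAU⁻ step `A ⟶ nf R'` from a στ-normal term `A` is simulated in CAU⁻σ: the principal
contraction `A ⟶ R'` is matched by one lazy Beta step `A ⟶ P` followed by a στ-reduction
`P ↠ R'` (for a στ-normal unannotated `M`, `⌈M⌉ ↠ r` and `⌊M⌋ ↠ M`), and `R' ↠ nf R'`.
Hence `N ↠ nf N ↠ S` and `R ↠ nf R ↠ S` in CAU⁻σ.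

The delicate case is trail inspection, where the lazy rule inspects `nfq (q · ⌈M⌉)` instead of
`q`. The two agree because τ-normal forms are unique on the trails that occur: `tnorm` reads a
trail as a reduced word (a chain of factors in which no two adjacent factors can be fused), it
is invariant under every step from a trail whose extractions `⌈M⌉` have στ-normal unannotated
arguments, and it is the identity on τ-normal trails.
-/

theorem Relation.ReflTransGen.update {ι α β : Type*} [DecidableEq ι] {R : α → α → Prop}
    {S : β → β → Prop} (F : (ι → α) → β)
    (hF : ∀ ζ i a, R (ζ i) a → S (F ζ) (F (Function.update ζ i a)))
    {ζ : ι → α} {i : ι} {b : α} (h : Relation.ReflTransGen R (ζ i) b) :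
    Relation.ReflTransGen S (F ζ) (F (Function.update ζ i b)) := by
  induction h with
  | refl => rw [Function.update_eq_self]
  | tail _ hcd ih =>
    have := hF (Function.update ζ i _) i _ (by rwa [Function.update_self])
    exact ih.tail (by rwa [Function.update_idem] at this)

theorem Relation.ReflTransGen.pi {ι α β : Type*} [DecidableEq ι] [Fintype ι]
    {R : α → α → Prop} {S : β → β → Prop} (F : (ι → α) → β)
    (hF : ∀ ζ i a, R (ζ i) a → S (F ζ) (F (Function.update ζ i a)))
    {ζ η : ι → α} (h : ∀ i, Relation.ReflTransGen R (ζ i) (η i)) :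
    Relation.ReflTransGen S (F ζ) (F η) := by
  suffices ∀ s : Finset ι, Relation.ReflTransGen S (F ζ) (F (s.piecewise η ζ)) by
    simpa using this Finset.univ
  intro s
  induction s using Finset.induction_on with
  | empty => rw [Finset.piecewise_empty]
  | insert i s hi ih =>
    rw [Finset.piecewise_insert]
    refine ih.trans (Relation.ReflTransGen.update F hF ?_)
    rw [Finset.piecewise_eq_of_notMem _ _ _ hi]
    exact h i

namespace CAU

open Relation

/-! ## στ-normal terms -/

def NormalBody (M : Tm) : Prop := NormalT M ∧ ∀ q N, M ≠ .ann q N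

theorem NormalBody.of_lam {M : Tm} (h : NormalT (.lam M)) : NormalBody M :=
  ⟨fun _ hs => h _ (.lamC hs), by rintro q N rfl; exact h _ (.lamAnn q N)⟩

theorem NormalBody.of_apL {M N : Tm} (h : NormalT (.ap M N)) : NormalBody M :=
  ⟨fun _ hs => h _ (.apL N hs), by rintro q M rfl; exact h _ (.apAnnL q M N)⟩

theorem NormalBody.of_apR {M N : Tm} (h : NormalT (.ap M N)) : NormalBody N :=
  ⟨fun _ hs => h _ (.apR M hs), by rintro q N rfl; exact h _ (.apAnnR q M N)⟩

theorem NormalBody.of_letsL {M N : Tm} (h : NormalT (.lets M N)) : NormalBody M :=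
  ⟨fun _ hs => h _ (.letsL N hs), by rintro q M rfl; exact h _ (.letsAnnL q M N)⟩

theorem NormalBody.of_letsR {M N : Tm} (h : NormalT (.lets M N)) : NormalBody N :=
  ⟨fun _ hs => h _ (.letsR M hs), by rintro q N rfl; exact h _ (.letsAnnR q M N)⟩

theorem NormalBody.of_bang {q : Tr} {M : Tm} (h : NormalT (.bang q M)) : NormalBody M :=
  ⟨fun _ hs => h _ (.bangM q hs), by rintro q' M rfl; exact h _ (.bangAnn q q' M)⟩

theorem NormalBody.of_ann {q : Tr} {M : Tm} (h : NormalT (.ann q M)) : NormalBody M :=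
  ⟨fun _ hs => h _ (.annM q hs), by rintro q' M rfl; exact h _ (.annAnn q q' M)⟩

theorem NormalBody.of_insp {ϑ : Fin 9 → Tm} (h : NormalT (.insp ϑ)) (i : Fin 9) :
    NormalBody (ϑ i) :=
  ⟨fun _ hs => h _ (.inspC i hs), fun q M hM => h _ (.inspAnn ϑ i q M hM)⟩

theorem NormalQ.of_bang {q : Tr} {M : Tm} (h : NormalT (.bang q M)) : NormalQ q :=
  fun _ hs => h _ (.bangQ M hs)

theorem NormalS.comp_eq_pow : ∀ {s t : Sb}, NormalS (.comp s t) → ∃ k, Sb.comp s t = pow (k + 1)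
  | .sh, .sh, _ => ⟨0, rfl⟩
  | .sh, .comp _ _, h => by
    obtain ⟨k, hk⟩ := comp_eq_pow fun _ hs => h _ (.compR _ hs)
    exact ⟨k + 1, by rw [hk]; rfl⟩
  | .sh, .id, h => absurd .shId (h _)
  | .sh, .cons M s, h => absurd (.shCons M s) (h _)
  | .id, t, h => absurd (.idComp t) (h _)
  | .cons M s, t, h => absurd (.consComp M s t) (h _)
  | .comp s₁ s₂, t, h => absurd (.compAssoc s₁ s₂ t) (h _)

mutual

theorem not_normalT_er : ∀ M : Tm, ¬NormalT (.er M)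
  | .one, h => h _ .erOne
  | .lam M, h => h _ (.erLam M)
  | .ap M N, h => h _ (.erAp M N)
  | .lets M N, h => h _ (.erLets M N)
  | .bang q M, h => h _ (.erBang q M)
  | .ann q M, h => h _ (.erAnn q M)
  | .insp ϑ, h => h _ (.erInsp ϑ)
  | .er M, h => not_normalT_er M fun _ hs => h _ (.erC hs)
  | .sub M s, h => by
    obtain ⟨rfl, k, rfl⟩ := NormalT.sub_eq (M := M) fun _ hs => h _ (.erC hs)
    exact h _ (.erOneSh k)

theorem NormalT.sub_eq : ∀ {M : Tm} {s : Sb}, NormalT (.sub M s) → M = .one ∧ ∃ k, s = pow k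
  | .one, .sh, _ => ⟨rfl, 0, rfl⟩
  | .one, .comp s t, h => by
    obtain ⟨k, hk⟩ := NormalS.comp_eq_pow fun _ hs => h _ (.subS _ hs)
    exact ⟨rfl, k + 1, hk⟩
  | .one, .id, h => absurd .subOneId (h _)
  | .one, .cons N s, h => absurd (.subOneCons N s) (h _)
  | .lam M, s, h => absurd (.subLam M s) (h _)
  | .ap M N, s, h => absurd (.subAp M N s) (h _)
  | .lets M N, s, h => absurd (.subLets M N s) (h _)
  | .bang q M, s, h => absurd (.subBang q M s) (h _)
  | .ann q M, s, h => absurd (.subAnn q M s) (h _)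
  | .insp ϑ, s, h => absurd (.subInsp ϑ s) (h _)
  | .sub M t, s, h => absurd (.subSub M t s) (h _)
  | .er M, s, h => absurd (fun _ hs => h _ (.subM s hs)) (not_normalT_er M)

end

theorem NormalBody.ext_reduces_r : ∀ {M : Tm}, NormalBody M → ReflTransGen StepQ (.ext M) .r
  | .one, _ => .single .extOne
  | .bang q M, _ => .single (.extBang q M)
  | .lam M, h => .head (.extLam M) <|
      ((of_lam h.1).ext_reduces_r.lift _ fun _ _ => .lamC).tail .lamRefl
  | .ap M N, h => .head (.extAp M N) <|
      (((of_apL h.1).ext_reduces_r.lift (Tr.ap · _) fun _ _ => .apL _).trans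
        ((of_apR h.1).ext_reduces_r.lift _ fun _ _ => .apR _)).tail .apRefl
  | .lets M N, h => .head (.extLets M N) <|
      (((of_letsL h.1).ext_reduces_r.lift (Tr.lets · _) fun _ _ => .letsL _).trans
        ((of_letsR h.1).ext_reduces_r.lift _ fun _ _ => .letsR _)).tail .letsRefl
  | .insp ϑ, h => .head (.extInsp ϑ) <|
      (ReflTransGen.pi Tr.tb (fun _ i _ => .tbC i)
        fun i => (of_insp h.1 i).ext_reduces_r).tail .tbRefl
  | .ann q M, h => absurd rfl (h.2 q M)
  | .er M, h => absurd h.1 (not_normalT_er M)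
  | .sub M s, h => by
    obtain ⟨rfl, k, rfl⟩ := NormalT.sub_eq h.1
    exact .single (.extOneSh k)

theorem NormalBody.er_reduces : ∀ {M : Tm}, NormalBody M → ReflTransGen StepT (.er M) M
  | .one, _ => .single .erOne
  | .bang q M, _ => .single (.erBang q M)
  | .lam M, h => .head (.erLam M) <| (of_lam h.1).er_reduces.lift _ fun _ _ => .lamC
  | .ap M N, h => .head (.erAp M N) <|
      ((of_apL h.1).er_reduces.lift (Tm.ap · _) fun _ _ => .apL _).trans
        ((of_apR h.1).er_reduces.lift _ fun _ _ => .apR _)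
  | .lets M N, h => .head (.erLets M N) <|
      ((of_letsL h.1).er_reduces.lift (Tm.lets · _) fun _ _ => .letsL _).trans
        ((of_letsR h.1).er_reduces.lift _ fun _ _ => .letsR _)
  | .insp ϑ, h => .head (.erInsp ϑ) <|
      ReflTransGen.pi Tm.insp (fun _ i _ => .inspC i) fun i => (of_insp h.1 i).er_reduces
  | .ann q M, h => absurd rfl (h.2 q M)
  | .er M, h => absurd h.1 (not_normalT_er M)
  | .sub M s, h => by
    obtain ⟨rfl, k, rfl⟩ := NormalT.sub_eq h.1
    exact .single (.erOneSh k)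

/-! ## Reduced words of trails -/

def Tr.size : Tr → ℕ
  | .r | .pb | .pbb | .ti | .ext _ => 1
  | .lam a => a.size + 1
  | .ap a b | .lets a b | .t a b => a.size + b.size + 1
  | .tb ζ => (∑ i, (ζ i).size) + 1

theorem Tr.size_pos (q : Tr) : 0 < q.size := by
  cases q <;> simp [Tr.size]

theorem Tr.size_lt_tb (ζ : Fin 9 → Tr) (i : Fin 9) : (ζ i).size < (Tr.tb ζ).size := by
  have := Finset.single_le_sum (fun j _ => Nat.zero_le (ζ j).size) (Finset.mem_univ i)
  simp only [Tr.size]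
  omega

def IsFactor (a : Tr) : Prop := a ≠ .r ∧ ∀ b bs, a ≠ .t b bs

def Fusable : Tr → Tr → Prop
  | .lam _, .lam _ | .ap _ _, .ap _ _ | .lets _ _, .lets _ _ | .tb _, .tb _ => True
  | _, _ => False

def Tr.headFactor : Tr → Tr
  | .t a _ => a
  | a => a

-- `comp x y` pushes the factors of `x` onto `y` one at a time; `push` fuses a factor with the
-- head factor of the word when both are built by the same constructor among `lam`, `ap`,
-- `lets`, `tb`.
mutual
def comp : Tr → Tr → Tr
  | .r, y => y
  | .t a as, y => push a (comp as y)
  | x, y => push x y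
termination_by x => 3 * x.size + 2
decreasing_by all_goals (try simp only [Tr.size]); omega
def push (a : Tr) : Tr → Tr
  | .r => a
  | .t b bs =>
      match fuse a b with
      | some c => .t c bs
      | none => .t a (.t b bs)
  | b =>
      match fuse a b with
      | some c => c
      | none => .t a b
termination_by 3 * a.size + 1
def fuse : Tr → Tr → Option Tr
  | .lam x, .lam y => some (.lam (comp x y))
  | .ap x₁ x₂, .ap y₁ y₂ => some (.ap (comp x₁ y₁) (comp x₂ y₂))
  | .lets x₁ x₂, .lets y₁ y₂ => some (.lets (comp x₁ y₁) (comp x₂ y₂))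
  | .tb ζ, .tb η => some (.tb fun i => comp (ζ i) (η i))
  | _, _ => none
termination_by a => 3 * a.size
decreasing_by
  all_goals first
    | (simp only [Tr.size]; have := Tr.size_pos x₂; omega)
    | (simp only [Tr.size]; omega)
    | (have := Tr.size_lt_tb ζ i; omega)
end

def Reduced : Tr → Prop
  | .r | .pb | .pbb | .ti => True
  | .lam a => Reduced a ∧ a ≠ .r
  | .ap a b | .lets a b => Reduced a ∧ Reduced b ∧ ¬(a = .r ∧ b = .r)
  | .tb ζ => (∀ i, Reduced (ζ i)) ∧ ¬∀ i, ζ i = .r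
  | .t a b => Reduced a ∧ Reduced b ∧ IsFactor a ∧ b ≠ .r ∧ ¬Fusable a b.headFactor
  | .ext _ => False

theorem Tr.headFactor_of_isFactor {a : Tr} (ha : IsFactor a) : a.headFactor = a := by
  cases a <;> first | exact absurd rfl ha.1 | exact absurd rfl (ha.2 _ _) | rfl

theorem r_comp (y : Tr) : comp .r y = y := by
  rw [comp]

theorem t_comp (a as y : Tr) : comp (.t a as) y = push a (comp as y) := by
  rw [comp]

theorem comp_of_isFactor {x : Tr} (hx : IsFactor x) (y : Tr) : comp x y = push x y := by
  cases x <;> first | exact absurd rfl hx.1 | exact absurd rfl (hx.2 _ _) | simp [comp]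

theorem push_r (a : Tr) : push a .r = a := by
  rw [push]

theorem push_t_of_fuse_eq_some {a b bs c : Tr} (h : fuse a b = some c) :
    push a (.t b bs) = .t c bs := by
  simp [push, h]

theorem push_t_of_fuse_eq_none {a b bs : Tr} (h : fuse a b = none) :
    push a (.t b bs) = .t a (.t b bs) := by
  simp [push, h]

theorem push_of_fuse_eq_some {a b c : Tr} (hb : IsFactor b) (h : fuse a b = some c) :
    push a b = c := by
  cases b <;> first | exact absurd rfl hb.1 | exact absurd rfl (hb.2 _ _) | simp [push, h]

theorem push_of_fuse_eq_none {a b : Tr} (hb : IsFactor b) (h : fuse a b = none) :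
    push a b = .t a b := by
  cases b <;> first | exact absurd rfl hb.1 | exact absurd rfl (hb.2 _ _) | simp [push, h]

theorem fuse_eq_none_iff {a b : Tr} : fuse a b = none ↔ ¬Fusable a b := by
  cases a <;> cases b <;> simp [fuse, Fusable]

theorem fuse_eq_none {a b : Tr} (hlam : ∀ x y, a = .lam x → b = .lam y → False)
    (hap : ∀ x₁ x₂ y₁ y₂, a = .ap x₁ x₂ → b = .ap y₁ y₂ → False)
    (hlets : ∀ x₁ x₂ y₁ y₂, a = .lets x₁ x₂ → b = .lets y₁ y₂ → False)
    (htb : ∀ ζ η, a = .tb ζ → b = .tb η → False) : fuse a b = none := by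
  cases a <;> cases b <;> simp only [fuse] <;> first
    | exact (hlam _ _ rfl rfl).elim
    | exact (hap _ _ _ _ rfl rfl).elim
    | exact (hlets _ _ _ _ rfl rfl).elim
    | exact (htb _ _ rfl rfl).elim

theorem isFactor_of_fuse_eq_some {a b c : Tr} (h : fuse a b = some c) : IsFactor c := by
  cases a <;> cases b <;> simp only [fuse, reduceCtorEq, Option.some.injEq] at h <;>
    subst h <;> exact ⟨nofun, nofun⟩

theorem fusable_iff_of_fuse_eq_some {a b c : Tr} (h : fuse a b = some c) (w : Tr) :
    Fusable c w ↔ Fusable b w := by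
  cases a <;> cases b <;> simp only [fuse, reduceCtorEq, Option.some.injEq] at h <;>
    subst h <;> cases w <;> simp [Fusable]

theorem eq_r_or_eq_t_of_not_isFactor {x : Tr} (hx : ¬IsFactor x) :
    x = .r ∨ ∃ a as, x = .t a as := by
  simpa [IsFactor, or_iff_not_imp_left] using hx

theorem push_ne_r {a : Tr} (ha : a ≠ .r) (z : Tr) : push a z ≠ .r := by
  by_cases hz : IsFactor z
  · cases h : fuse a z with
    | none => simp [push_of_fuse_eq_none hz h]
    | some c => exact push_of_fuse_eq_some hz h ▸ (isFactor_of_fuse_eq_some h).1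
  · obtain rfl | ⟨b, bs, rfl⟩ := eq_r_or_eq_t_of_not_isFactor hz
    · rwa [push_r]
    · cases h : fuse a b <;> simp [push_t_of_fuse_eq_none, push_t_of_fuse_eq_some, h]

theorem eq_r_of_comp_eq_r {x y : Tr} (hx : Reduced x) (h : comp x y = .r) :
    x = .r ∧ y = .r := by
  by_cases hfx : IsFactor x
  · exact absurd h (comp_of_isFactor hfx y ▸ push_ne_r hfx.1 y)
  · obtain rfl | ⟨a, as, rfl⟩ := eq_r_or_eq_t_of_not_isFactor hfx
    · exact ⟨rfl, by rwa [r_comp] at h⟩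
    · exact absurd h (t_comp .. ▸ push_ne_r hx.2.2.1.1 _)

theorem push_of_not_fusable {a z : Tr} (hz : z ≠ .r) (h : ¬Fusable a z.headFactor) :
    push a z = .t a z := by
  by_cases hfz : IsFactor z
  · rw [Tr.headFactor_of_isFactor hfz] at h
    exact push_of_fuse_eq_none hfz (fuse_eq_none_iff.2 h)
  · obtain rfl | ⟨b, bs, rfl⟩ := eq_r_or_eq_t_of_not_isFactor hfz
    · exact absurd rfl hz
    · exact push_t_of_fuse_eq_none (fuse_eq_none_iff.2 h)

theorem reduced_comp_push_fuse :
    (∀ x y, Reduced x → Reduced y → Reduced (comp x y)) ∧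
    (∀ a z, IsFactor a → Reduced a → Reduced z → Reduced (push a z)) ∧
    (∀ a b, Reduced a → Reduced b → ∀ c, fuse a b = some c → Reduced c) := by
  refine comp.mutual_induct _ _ _ ?r ?t ?factor ?push_r ?push_t_fused ?push_t_unfused ?push_fused
    ?push_unfused ?lam ?ap ?lets ?tb ?not_fusable
  case r => intro y _ hy; rwa [r_comp]
  case t =>
    intro a as y ih₁ ih₂ ⟨ha, has, hfa, _⟩ hy
    rw [t_comp]
    exact ih₂ hfa ha (ih₁ has hy)
  case factor =>
    intro x y hr ht ih hx hy
    rw [comp_of_isFactor ⟨hr, ht⟩]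
    exact ih ⟨hr, ht⟩ hx hy
  case push_r => intro a _ ha _; rwa [push_r]
  case push_t_fused =>
    intro a b bs c h ih _ ha ⟨hb, hbs, _, hbsr, hnf⟩
    rw [push_t_of_fuse_eq_some h]
    exact ⟨ih ha hb c h, hbs, isFactor_of_fuse_eq_some h, hbsr,
      (fusable_iff_of_fuse_eq_some h _).not.2 hnf⟩
  case push_t_unfused =>
    intro a b bs h _ hfa ha hz
    rw [push_t_of_fuse_eq_none h]
    exact ⟨ha, hz, hfa, nofun, fuse_eq_none_iff.1 h⟩
  case push_fused =>
    intro a x hr ht c h ih _ ha hx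
    rw [push_of_fuse_eq_some ⟨hr, ht⟩ h]
    exact ih ha hx c h
  case push_unfused =>
    intro a x hr ht h _ hfa ha hx
    rw [push_of_fuse_eq_none ⟨hr, ht⟩ h]
    exact ⟨ha, hx, hfa, hr, by rw [Tr.headFactor_of_isFactor ⟨hr, ht⟩]; exact fuse_eq_none_iff.1 h⟩
  case lam =>
    rintro x y ih ⟨hx, hxr⟩ ⟨hy, -⟩ c h
    simp only [fuse, Option.some.injEq] at h
    subst h
    exact ⟨ih hx hy, fun e => hxr (eq_r_of_comp_eq_r hx e).1⟩
  case ap | lets =>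
    rintro x₁ x₂ y₁ y₂ ih₁ ih₂ ⟨hx₁, hx₂, hxr⟩ ⟨hy₁, hy₂, -⟩ c h
    simp only [fuse, Option.some.injEq] at h
    subst h
    exact ⟨ih₁ hx₁ hy₁, ih₂ hx₂ hy₂, fun ⟨e₁, e₂⟩ =>
      hxr ⟨(eq_r_of_comp_eq_r hx₁ e₁).1, (eq_r_of_comp_eq_r hx₂ e₂).1⟩⟩
  case tb =>
    rintro ζ η ih ⟨hζ, hζr⟩ ⟨hη, -⟩ c h
    simp only [fuse, Option.some.injEq] at h
    subst h
    exact ⟨fun i => ih i (hζ i) (hη i), fun e => hζr fun i => (eq_r_of_comp_eq_r (hζ i) (e i)).1⟩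
  case not_fusable =>
    intro a b h₁ h₂ h₃ h₄ _ _ c h
    rw [fuse_eq_none h₁ h₂ h₃ h₄] at h
    cases h

theorem reduced_comp {x y : Tr} (hx : Reduced x) (hy : Reduced y) : Reduced (comp x y) :=
  reduced_comp_push_fuse.1 x y hx hy

theorem comp_r : ∀ {x : Tr}, Reduced x → comp x .r = x
  | .r, _ => r_comp _
  | .t _ _, ⟨_, has, _, hasr, hnf⟩ => by
    rw [t_comp, comp_r has, push_of_not_fusable hasr hnf]
  | .pb, _ | .pbb, _ | .ti, _ | .lam _, _ | .ap _ _, _ | .lets _ _, _ | .tb _, _ | .ext _, _ =>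
    by simp [comp, push_r]

theorem push_push {a b c z : Tr} (hb : IsFactor b) (hz : Reduced z) (hab : fuse a b = some c)
    (hassoc : ∀ d e, Reduced d → fuse b d = some e → fuse a e = fuse c d) :
    push a (push b z) = push c z := by
  have hcd (d : Tr) : fuse c d = none ↔ fuse b d = none := by
    simp only [fuse_eq_none_iff, fusable_iff_of_fuse_eq_some hab]
  have hfused {d e : Tr} (hd : Reduced d) (h : fuse b d = some e) :
      ∃ g, fuse a e = some g ∧ fuse c d = some g := by
    obtain ⟨g, hg⟩ := Option.ne_none_iff_exists'.1 (mt (hcd d).1 (by simp [h]))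
    exact ⟨g, (hassoc d e hd h).trans hg, hg⟩
  by_cases hfz : IsFactor z
  · cases hbz : fuse b z with
    | none =>
      rw [push_of_fuse_eq_none hfz hbz, push_t_of_fuse_eq_some hab,
        push_of_fuse_eq_none hfz ((hcd z).2 hbz)]
    | some e =>
      obtain ⟨g, hae, hcz⟩ := hfused hz hbz
      rw [push_of_fuse_eq_some hfz hbz, push_of_fuse_eq_some (isFactor_of_fuse_eq_some hbz) hae,
        push_of_fuse_eq_some hfz hcz]
  · obtain rfl | ⟨d, ds, rfl⟩ := eq_r_or_eq_t_of_not_isFactor hfz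
    · rw [push_r, push_r, push_of_fuse_eq_some hb hab]
    · cases hbd : fuse b d with
      | none =>
        rw [push_t_of_fuse_eq_none hbd, push_t_of_fuse_eq_some hab,
          push_t_of_fuse_eq_none ((hcd d).2 hbd)]
      | some e =>
        obtain ⟨g, hae, hcg⟩ := hfused hz.1 hbd
        rw [push_t_of_fuse_eq_some hbd, push_t_of_fuse_eq_some hae, push_t_of_fuse_eq_some hcg]

theorem comp_assoc_push_fuse :
    (∀ x y, Reduced x → Reduced y → ∀ z, Reduced z → comp (comp x y) z = comp x (comp y z)) ∧
    (∀ a w, IsFactor a → Reduced a → Reduced w → ∀ z, Reduced z →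
      comp (push a w) z = push a (comp w z)) ∧
    (∀ a b, Reduced a → Reduced b → ∀ d c e, Reduced d → fuse a b = some c → fuse b d = some e →
      fuse a e = fuse c d) := by
  refine comp.mutual_induct _ _ _ ?r ?t ?factor ?push_r ?push_t_fused ?push_t_unfused ?push_fused
    ?push_unfused ?lam ?ap ?lets ?tb ?not_fusable
  case r => intro y _ _ z _; simp only [r_comp]
  case t =>
    intro a as y ih₁ ih₂ ⟨ha, has, hfa, _⟩ hy z hz
    simp only [t_comp]
    rw [ih₂ hfa ha (reduced_comp has hy) z hz, ih₁ has hy z hz]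
  case factor =>
    intro x y hr ht ih hx hy z hz
    simp only [comp_of_isFactor ⟨hr, ht⟩]
    exact ih ⟨hr, ht⟩ hx hy z hz
  case push_r => intro a hfa _ _ z _; rw [push_r, r_comp, comp_of_isFactor hfa]
  case push_t_fused =>
    intro a b bs c h ih _ ha ⟨hb, hbs, hfb, _⟩ z hz
    rw [push_t_of_fuse_eq_some h, t_comp, t_comp,
      push_push hfb (reduced_comp hbs hz) h fun d e hd => ih ha hb d c e hd h]
  case push_t_unfused => intro a b bs h _ _ _ _ z _; rw [push_t_of_fuse_eq_none h, t_comp]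
  case push_fused =>
    intro a x hr ht c h ih _ ha hx z hz
    rw [push_of_fuse_eq_some ⟨hr, ht⟩ h, comp_of_isFactor (isFactor_of_fuse_eq_some h),
      comp_of_isFactor ⟨hr, ht⟩, push_push ⟨hr, ht⟩ hz h fun d e hd => ih ha hx d c e hd h]
  case push_unfused => intro a x hr ht h _ _ _ _ z _; rw [push_of_fuse_eq_none ⟨hr, ht⟩ h, t_comp]
  case lam =>
    intro x y ih ⟨hx, _⟩ ⟨hy, _⟩ d c e hd hab hbd
    cases d <;> simp only [fuse, reduceCtorEq, Option.some.injEq] at hab hbd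
    subst hab hbd
    simp only [fuse, ih hx hy _ hd.1]
  case ap | lets =>
    intro x₁ x₂ y₁ y₂ ih₁ ih₂ ⟨hx₁, hx₂, _⟩ ⟨hy₁, hy₂, _⟩ d c e hd hab hbd
    cases d <;> simp only [fuse, reduceCtorEq, Option.some.injEq] at hab hbd
    subst hab hbd
    simp only [fuse, ih₁ hx₁ hy₁ _ hd.1, ih₂ hx₂ hy₂ _ hd.2.1]
  case tb =>
    intro ζ η ih ⟨hζ, _⟩ ⟨hη, _⟩ d c e hd hab hbd
    cases d <;> simp only [fuse, reduceCtorEq, Option.some.injEq] at hab hbd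
    subst hab hbd
    simp only [fuse, ih _ (hζ _) (hη _) _ (hd.1 _)]
  case not_fusable =>
    intro a b h₁ h₂ h₃ h₄ _ _ _ c _ _ h
    rw [fuse_eq_none h₁ h₂ h₃ h₄] at h
    cases h

theorem comp_assoc {x y z : Tr} (hx : Reduced x) (hy : Reduced y) (hz : Reduced z) :
    comp (comp x y) z = comp x (comp y z) :=
  comp_assoc_push_fuse.1 x y hx hy z hz

theorem comp_of_fuse_eq_some {a b c : Tr} (ha : IsFactor a) (hb : IsFactor b)
    (h : fuse a b = some c) : comp a b = c := by
  rw [comp_of_isFactor ha, push_of_fuse_eq_some hb h]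

def mkLam : Tr → Tr
  | .r => .r
  | a => .lam a

def mkAp : Tr → Tr → Tr
  | .r, .r => .r
  | a, b => .ap a b

def mkLets : Tr → Tr → Tr
  | .r, .r => .r
  | a, b => .lets a b

open Classical in
noncomputable def mkTb (ζ : Fin 9 → Tr) : Tr :=
  if ∀ i, ζ i = .r then .r else .tb ζ

theorem mkLam_of_ne {a : Tr} (h : a ≠ .r) : mkLam a = .lam a := by
  cases a <;> simp_all [mkLam]

theorem mkAp_of_ne {a b : Tr} (h : ¬(a = .r ∧ b = .r)) : mkAp a b = .ap a b := by
  cases a <;> cases b <;> simp_all [mkAp]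

theorem mkLets_of_ne {a b : Tr} (h : ¬(a = .r ∧ b = .r)) : mkLets a b = .lets a b := by
  cases a <;> cases b <;> simp_all [mkLets]

theorem mkTb_of_ne {ζ : Fin 9 → Tr} (h : ¬∀ i, ζ i = .r) : mkTb ζ = .tb ζ := by
  simp [mkTb, h]

theorem mkTb_r : mkTb (fun _ => .r) = .r := by
  simp [mkTb]

theorem reduced_mkLam {a : Tr} (ha : Reduced a) : Reduced (mkLam a) := by
  by_cases h : a = .r
  · subst h; trivial
  · rw [mkLam_of_ne h]; exact ⟨ha, h⟩

theorem reduced_mkAp {a b : Tr} (ha : Reduced a) (hb : Reduced b) : Reduced (mkAp a b) := by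
  by_cases h : a = .r ∧ b = .r
  · obtain ⟨rfl, rfl⟩ := h; trivial
  · rw [mkAp_of_ne h]; exact ⟨ha, hb, h⟩

theorem reduced_mkLets {a b : Tr} (ha : Reduced a) (hb : Reduced b) : Reduced (mkLets a b) := by
  by_cases h : a = .r ∧ b = .r
  · obtain ⟨rfl, rfl⟩ := h; trivial
  · rw [mkLets_of_ne h]; exact ⟨ha, hb, h⟩

theorem reduced_mkTb {ζ : Fin 9 → Tr} (hζ : ∀ i, Reduced (ζ i)) : Reduced (mkTb ζ) := by
  by_cases h : ∀ i, ζ i = .r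
  · rw [funext h, mkTb_r]; trivial
  · rw [mkTb_of_ne h]; exact ⟨hζ, h⟩

theorem comp_mkLam {a : Tr} (ha : Reduced a) (b : Tr) :
    comp (mkLam a) (mkLam b) = mkLam (comp a b) := by
  by_cases ha' : a = .r
  · subst ha'; simp only [mkLam, r_comp]
  by_cases hb' : b = .r
  · subst hb'; rw [mkLam, comp_r (reduced_mkLam ha), comp_r ha]
  rw [mkLam_of_ne ha', mkLam_of_ne hb', mkLam_of_ne fun e => ha' (eq_r_of_comp_eq_r ha e).1]
  exact comp_of_fuse_eq_some ⟨nofun, nofun⟩ ⟨nofun, nofun⟩ (by simp only [fuse])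

theorem comp_mkAp {a₁ a₂ : Tr} (ha₁ : Reduced a₁) (ha₂ : Reduced a₂) (b₁ b₂ : Tr) :
    comp (mkAp a₁ a₂) (mkAp b₁ b₂) = mkAp (comp a₁ b₁) (comp a₂ b₂) := by
  by_cases ha : a₁ = .r ∧ a₂ = .r
  · obtain ⟨rfl, rfl⟩ := ha; simp only [mkAp, r_comp]
  by_cases hb : b₁ = .r ∧ b₂ = .r
  · obtain ⟨rfl, rfl⟩ := hb; rw [mkAp, comp_r (reduced_mkAp ha₁ ha₂), comp_r ha₁, comp_r ha₂]
  rw [mkAp_of_ne ha, mkAp_of_ne hb, mkAp_of_ne fun ⟨e₁, e₂⟩ =>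
    ha ⟨(eq_r_of_comp_eq_r ha₁ e₁).1, (eq_r_of_comp_eq_r ha₂ e₂).1⟩]
  exact comp_of_fuse_eq_some ⟨nofun, nofun⟩ ⟨nofun, nofun⟩ (by simp only [fuse])

theorem comp_mkLets {a₁ a₂ : Tr} (ha₁ : Reduced a₁) (ha₂ : Reduced a₂) (b₁ b₂ : Tr) :
    comp (mkLets a₁ a₂) (mkLets b₁ b₂) = mkLets (comp a₁ b₁) (comp a₂ b₂) := by
  by_cases ha : a₁ = .r ∧ a₂ = .r
  · obtain ⟨rfl, rfl⟩ := ha; simp only [mkLets, r_comp]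
  by_cases hb : b₁ = .r ∧ b₂ = .r
  · obtain ⟨rfl, rfl⟩ := hb; rw [mkLets, comp_r (reduced_mkLets ha₁ ha₂), comp_r ha₁, comp_r ha₂]
  rw [mkLets_of_ne ha, mkLets_of_ne hb, mkLets_of_ne fun ⟨e₁, e₂⟩ =>
    ha ⟨(eq_r_of_comp_eq_r ha₁ e₁).1, (eq_r_of_comp_eq_r ha₂ e₂).1⟩]
  exact comp_of_fuse_eq_some ⟨nofun, nofun⟩ ⟨nofun, nofun⟩ (by simp only [fuse])

theorem comp_mkTb {ζ : Fin 9 → Tr} (hζ : ∀ i, Reduced (ζ i)) (η : Fin 9 → Tr) :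
    comp (mkTb ζ) (mkTb η) = mkTb fun i => comp (ζ i) (η i) := by
  by_cases hζ' : ∀ i, ζ i = .r
  · simp only [funext hζ', mkTb_r, r_comp]
  by_cases hη' : ∀ i, η i = .r
  · simp only [funext hη', mkTb_r, comp_r (reduced_mkTb hζ), comp_r (hζ _)]
  rw [mkTb_of_ne hζ', mkTb_of_ne hη', mkTb_of_ne fun e =>
    hζ' fun i => (eq_r_of_comp_eq_r (hζ i) (e i)).1]
  exact comp_of_fuse_eq_some ⟨nofun, nofun⟩ ⟨nofun, nofun⟩ (by simp only [fuse])

/-! ## Uniqueness of τ-normal forms of trails -/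

noncomputable def tnorm : Tr → Tr
  | .r => .r
  | .pb => .pb
  | .pbb => .pbb
  | .ti => .ti
  | .lam a => mkLam (tnorm a)
  | .ap a b => mkAp (tnorm a) (tnorm b)
  | .lets a b => mkLets (tnorm a) (tnorm b)
  | .tb ζ => mkTb fun i => tnorm (ζ i)
  | .t a b => comp (tnorm a) (tnorm b)
  -- what `⌈M⌉` reduces to when `M` is στ-normal and unannotated
  | .ext _ => .r

theorem reduced_tnorm : ∀ q : Tr, Reduced (tnorm q)
  | .r | .pb | .pbb | .ti | .ext _ => trivial
  | .lam a => reduced_mkLam (reduced_tnorm a)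
  | .ap a b => reduced_mkAp (reduced_tnorm a) (reduced_tnorm b)
  | .lets a b => reduced_mkLets (reduced_tnorm a) (reduced_tnorm b)
  | .tb ζ => reduced_mkTb fun i => reduced_tnorm (ζ i)
  | .t a b => reduced_comp (reduced_tnorm a) (reduced_tnorm b)

theorem tnorm_of_reduced : ∀ {q : Tr}, Reduced q → tnorm q = q
  | .r, _ | .pb, _ | .pbb, _ | .ti, _ => rfl
  | .lam a, ⟨ha, har⟩ => by rw [tnorm, tnorm_of_reduced ha, mkLam_of_ne har]
  | .ap a b, ⟨ha, hb, hr⟩ => by rw [tnorm, tnorm_of_reduced ha, tnorm_of_reduced hb, mkAp_of_ne hr]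
  | .lets a b, ⟨ha, hb, hr⟩ => by
    rw [tnorm, tnorm_of_reduced ha, tnorm_of_reduced hb, mkLets_of_ne hr]
  | .tb ζ, ⟨hζ, hr⟩ => by
    rw [tnorm, funext fun i => tnorm_of_reduced (hζ i), mkTb_of_ne hr]
  | .t a b, ⟨ha, hb, hfa, hbr, hnf⟩ => by
    rw [tnorm, tnorm_of_reduced ha, tnorm_of_reduced hb, comp_of_isFactor hfa,
      push_of_not_fusable hbr hnf]

def ExtNormal : Tr → Prop
  | .r | .pb | .pbb | .ti => True
  | .lam a => ExtNormal a
  | .ap a b | .lets a b | .t a b => ExtNormal a ∧ ExtNormal b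
  | .tb ζ => ∀ i, ExtNormal (ζ i)
  | .ext M => NormalBody M

theorem ExtNormal.of_stepQ : ∀ {q q' : Tr}, StepQ q q' → ExtNormal q → ExtNormal q'
  | _, _, .extLam _, h => .of_lam h.1
  | _, _, .extAp _ _, h => ⟨.of_apL h.1, .of_apR h.1⟩
  | _, _, .extLets _ _, h => ⟨.of_letsL h.1, .of_letsR h.1⟩
  | _, _, .extInsp _, h => fun i => .of_insp h.1 i
  | _, _, .extAnn q M, h => absurd rfl (h.2 q M)
  | _, _, .extC hs, h => absurd hs (h.1 _)
  | _, _, .tL _ hs, h => ⟨of_stepQ hs h.1, h.2⟩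
  | _, _, .tR _ hs, h => ⟨h.1, of_stepQ hs h.2⟩
  | _, _, .lamC hs, h => (of_stepQ hs h :)
  | _, _, .apL _ hs, h | _, _, .letsL _ hs, h => ⟨of_stepQ hs h.1, h.2⟩
  | _, _, .apR _ hs, h | _, _, .letsR _ hs, h => ⟨h.1, of_stepQ hs h.2⟩
  | _, _, .tbC i hs, h => fun j => by
    rcases eq_or_ne j i with rfl | hj
    · simpa using of_stepQ hs (h j)
    · simpa [hj] using h j
  | _, _, .extOne, _ | _, _, .extOneSh _, _ | _, _, .extBang _ _, _ | _, _, .tReflR _, h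
  | _, _, .tReflL _, h | _, _, .tbRefl, h | _, _, .apRefl, h | _, _, .lamRefl, h
  | _, _, .letsRefl, h | _, _, .tAssoc .., h | _, _, .tLam .., h | _, _, .tLamT .., h
  | _, _, .tAp .., h | _, _, .tApT .., h | _, _, .tLets .., h | _, _, .tLetsT .., h
  | _, _, .tTb .., h | _, _, .tTbT .., h => by simp_all [ExtNormal]

theorem tnorm_t_t_eq {a b c d : Tr} (h : tnorm (.t a b) = tnorm d) :
    tnorm (.t a (.t b c)) = tnorm (.t d c) := by
  simp only [tnorm] at h ⊢
  rw [← comp_assoc (reduced_tnorm a) (reduced_tnorm b) (reduced_tnorm c), h]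

theorem tnorm_eq_of_stepQ : ∀ {q q' : Tr}, StepQ q q' → ExtNormal q → tnorm q = tnorm q'
  | _, _, .extOne, _ | _, _, .extOneSh _, _ | _, _, .extBang _ _, _ | _, _, .extC _, _
  | _, _, .extLam _, _ | _, _, .extAp _ _, _ | _, _, .extLets _ _, _
  | _, _, .apRefl, _ | _, _, .lamRefl, _ | _, _, .letsRefl, _ => rfl
  | _, _, .tbRefl, _ => mkTb_r
  | _, _, .extInsp _, _ => mkTb_r.symm
  | _, _, .extAnn q M, h => absurd rfl (h.2 q M)
  | _, _, .tReflL _, _ => r_comp _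
  | _, _, .tReflR _, _ => comp_r (reduced_tnorm _)
  | _, _, .tAssoc .., _ => comp_assoc (reduced_tnorm _) (reduced_tnorm _) (reduced_tnorm _)
  | _, _, .tLam .., _ => comp_mkLam (reduced_tnorm _) _
  | _, _, .tAp .., _ => comp_mkAp (reduced_tnorm _) (reduced_tnorm _) _ _
  | _, _, .tLets .., _ => comp_mkLets (reduced_tnorm _) (reduced_tnorm _) _ _
  | _, _, .tTb .., _ => comp_mkTb (fun _ => reduced_tnorm _) _
  | _, _, .tLamT .., _ => tnorm_t_t_eq (comp_mkLam (reduced_tnorm _) _)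
  | _, _, .tApT .., _ => tnorm_t_t_eq (comp_mkAp (reduced_tnorm _) (reduced_tnorm _) _ _)
  | _, _, .tLetsT .., _ => tnorm_t_t_eq (comp_mkLets (reduced_tnorm _) (reduced_tnorm _) _ _)
  | _, _, .tTbT .., _ => tnorm_t_t_eq (comp_mkTb (fun _ => reduced_tnorm _) _)
  | _, _, .tL _ hs, h | _, _, .apL _ hs, h | _, _, .letsL _ hs, h => by
    simp only [tnorm, tnorm_eq_of_stepQ hs h.1]
  | _, _, .tR _ hs, h | _, _, .apR _ hs, h | _, _, .letsR _ hs, h => by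
    simp only [tnorm, tnorm_eq_of_stepQ hs h.2]
  | _, _, .lamC hs, h => by simp only [tnorm, tnorm_eq_of_stepQ hs h]
  | _, _, .tbC i hs, h => by
    simp only [tnorm]
    congr 1
    funext j
    rcases eq_or_ne j i with rfl | hj
    · simpa using tnorm_eq_of_stepQ hs (h j)
    · simp [hj]

theorem ExtNormal.tnorm_eq_of_reflTransGen {q q' : Tr} (hq : ExtNormal q)
    (h : ReflTransGen StepQ q q') : ExtNormal q' ∧ tnorm q = tnorm q' := by
  induction h with
  | refl => exact ⟨hq, rfl⟩
  | tail _ hs ih => exact ⟨ih.1.of_stepQ hs, ih.2.trans (tnorm_eq_of_stepQ hs ih.1)⟩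

theorem NormalQ.extNormal : ∀ {q : Tr}, NormalQ q → ExtNormal q
  | .r, _ | .pb, _ | .pbb, _ | .ti, _ => trivial
  | .lam _, h => (extNormal fun _ hs => h _ (.lamC hs) :)
  | .ap _ _, h => ⟨extNormal fun _ hs => h _ (.apL _ hs), extNormal fun _ hs => h _ (.apR _ hs)⟩
  | .lets _ _, h =>
    ⟨extNormal fun _ hs => h _ (.letsL _ hs), extNormal fun _ hs => h _ (.letsR _ hs)⟩
  | .t _ _, h => ⟨extNormal fun _ hs => h _ (.tL _ hs), extNormal fun _ hs => h _ (.tR _ hs)⟩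
  | .tb _, h => fun i => extNormal fun _ hs => h _ (.tbC i hs)
  | .ext _, h => ⟨fun _ hs => h _ (.extC hs), by rintro q M rfl; exact h _ (.extAnn q M)⟩

theorem NormalQ.not_fusable_headFactor {a b : Tr} (h : NormalQ (.t a b)) :
    ¬Fusable a b.headFactor := by
  intro hf
  cases a <;> cases b <;> first
    | exact absurd hf id
    | exact h _ (.tLam ..) | exact h _ (.tAp ..) | exact h _ (.tLets ..) | exact h _ (.tTb ..)
    | (rename_i b₀ _; cases b₀ <;> first
        | exact absurd hf id
        | exact h _ (.tLamT ..) | exact h _ (.tApT ..) | exact h _ (.tLetsT ..)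
        | exact h _ (.tTbT ..))

theorem NormalQ.reduced : ∀ {q : Tr}, NormalQ q → Reduced q
  | .r, _ | .pb, _ | .pbb, _ | .ti, _ => trivial
  | .lam _, h => ⟨reduced fun _ hs => h _ (.lamC hs), by rintro rfl; exact h _ .lamRefl⟩
  | .ap _ _, h => ⟨reduced fun _ hs => h _ (.apL _ hs), reduced fun _ hs => h _ (.apR _ hs),
      by rintro ⟨rfl, rfl⟩; exact h _ .apRefl⟩
  | .lets _ _, h => ⟨reduced fun _ hs => h _ (.letsL _ hs), reduced fun _ hs => h _ (.letsR _ hs),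
      by rintro ⟨rfl, rfl⟩; exact h _ .letsRefl⟩
  | .tb ζ, h => ⟨fun i => reduced fun _ hs => h _ (.tbC i hs),
      fun hr => by obtain rfl : ζ = fun _ => .r := funext hr; exact h _ .tbRefl⟩
  | .t a b, h => ⟨reduced fun _ hs => h _ (.tL _ hs), reduced fun _ hs => h _ (.tR _ hs),
      ⟨by rintro rfl; exact h _ (.tReflL b), by rintro c d rfl; exact h _ (.tAssoc c d b)⟩,
      by rintro rfl; exact h _ (.tReflR a), h.not_fusable_headFactor⟩
  | .ext M, h => by
    obtain hr | ⟨q, hs, -⟩ := (extNormal h).ext_reduces_r.cases_head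
    · cases hr
    · exact absurd hs (h q)

theorem IsNFQ.t_ext_eq {nfq : Tr → Tr} (hq : IsNFQ nfq) {q : Tr} {M : Tm} (hnq : NormalQ q)
    (hM : NormalBody M) : nfq (.t q (.ext M)) = q := by
  obtain ⟨hred, hnorm⟩ := hq (.t q (.ext M))
  calc nfq (.t q (.ext M))
      = tnorm (nfq (.t q (.ext M))) := (tnorm_of_reduced hnorm.reduced).symm
    _ = tnorm (.t q (.ext M)) := (ExtNormal.tnorm_eq_of_reflTransGen
      (show ExtNormal (.t q (.ext M)) from ⟨hnq.extNormal, hM⟩) hred).2.symm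
    _ = q := by rw [tnorm, tnorm_of_reduced hnq.reduced]; exact comp_r hnq.reduced

/-! ## Simulation of CAU⁻ reduction -/

theorem reflTransGen_ann {q q' : Tr} {M M' : Tm} (hq : ReflTransGen StepQ q q')
    (hM : ReflTransGen StepT M M') : ReflTransGen StepT (.ann q M) (.ann q' M') :=
  (hq.lift (Tm.ann · M) fun _ _ => .annQ M).trans (hM.lift _ fun _ _ => .annM q')

theorem reflTransGen_sub_cons {M M' N N' : Tm} (hM : ReflTransGen StepT M M')
    (hN : ReflTransGen StepT N N') :
    ReflTransGen StepT (.sub M (.cons N .id)) (.sub M' (.cons N' .id)) :=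
  (hM.lift (Tm.sub · _) fun _ _ => .subM _).trans
    (hN.lift (fun x => Tm.sub M' (.cons x .id)) fun _ _ h => .subS _ (.consM _ h))

theorem lBeta_beta_reduces {M N : Tm} (hM : NormalBody M) (hN : NormalBody N) :
    ReflTransGen StepT
      (.ann (.t (.ap (.lam (.ext M)) (.ext N)) .pb) (.sub (.er M) (.cons (.er N) .id)))
      (.ann .pb (.sub M (.cons N .id))) := by
  refine reflTransGen_ann ?_ (reflTransGen_sub_cons hM.er_reduces hN.er_reduces)
  have hlam : ReflTransGen StepQ (.lam (.ext M)) .r :=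
    (hM.ext_reduces_r.lift _ fun _ _ => .lamC).tail .lamRefl
  have hap : ReflTransGen StepQ (.ap (.lam (.ext M)) (.ext N)) .r :=
    ((hlam.lift (Tr.ap · _) fun _ _ => .apL _).trans
      (hN.ext_reduces_r.lift _ fun _ _ => .apR _)).tail .apRefl
  exact (hap.lift (Tr.t · _) fun _ _ => .tL _).tail (.tReflL _)

theorem lBeta_betaBang_reduces {q : Tr} {M N : Tm} (hN : NormalBody N) :
    ReflTransGen StepT
      (.ann (.t (.lets .r (.ext N)) .pbb) (.sub (.er N) (.cons (.ann q M) .id)))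
      (.ann .pbb (.sub N (.cons (.ann q M) .id))) := by
  refine reflTransGen_ann ?_ (reflTransGen_sub_cons hN.er_reduces .refl)
  have hlets : ReflTransGen StepQ (.lets .r (.ext N)) .r :=
    (hN.ext_reduces_r.lift _ fun _ _ => .letsR _).tail .letsRefl
  exact (hlets.lift (Tr.t · _) fun _ _ => .tL _).tail (.tReflL _)

theorem NaiveBeta.exists_lBeta {nfq : Tr → Tr} (hq : IsNFQ nfq) {M R : Tm} (h : NaiveBeta M R)
    (hM : NormalT M) : ∃ P, LBeta nfq M P ∧ ReflTransGen StepT P R := by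
  induction h with
  | beta M N =>
    exact ⟨_, .beta M N, lBeta_beta_reduces (.of_lam (NormalBody.of_apL hM).1) (.of_apR hM)⟩
  | betaBang q M N => exact ⟨_, .betaBang q M N, lBeta_betaBang_reduces (.of_letsR hM)⟩
  | insp hF => exact ⟨_, .insp (by rwa [hq.t_ext_eq (.of_bang hM) (.of_bang hM)]), .refl⟩
  | lam _ ih =>
    obtain ⟨P, hP, hPR⟩ := ih (NormalBody.of_lam hM).1
    exact ⟨_, .lam hP, hPR.lift _ fun _ _ => .lamC⟩
  | apL N _ ih =>
    obtain ⟨P, hP, hPR⟩ := ih (NormalBody.of_apL hM).1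
    exact ⟨_, .apL N hP, hPR.lift (Tm.ap · N) fun _ _ => .apL N⟩
  | apR M _ ih =>
    obtain ⟨P, hP, hPR⟩ := ih (NormalBody.of_apR hM).1
    exact ⟨_, .apR M hP, hPR.lift _ fun _ _ => .apR M⟩
  | letsL N _ ih =>
    obtain ⟨P, hP, hPR⟩ := ih (NormalBody.of_letsL hM).1
    exact ⟨_, .letsL N hP, hPR.lift (Tm.lets · N) fun _ _ => .letsL N⟩
  | letsR M _ ih =>
    obtain ⟨P, hP, hPR⟩ := ih (NormalBody.of_letsR hM).1
    exact ⟨_, .letsR M hP, hPR.lift _ fun _ _ => .letsR M⟩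
  | bang q _ ih =>
    obtain ⟨P, hP, hPR⟩ := ih (NormalBody.of_bang hM).1
    exact ⟨_, .bang q hP, hPR.lift _ fun _ _ => .bangM q⟩
  | ann q _ ih =>
    obtain ⟨P, hP, hPR⟩ := ih (NormalBody.of_ann hM).1
    exact ⟨_, .ann q hP, hPR.lift _ fun _ _ => .annM q⟩
  | @inspC ϑ i M' _ ih =>
    obtain ⟨P, hP, hPR⟩ := ih (NormalBody.of_insp hM i).1
    refine ⟨_, .inspC i hP, ?_⟩
    have hPR' : ReflTransGen StepT (Function.update ϑ i P i) M' := by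
      rwa [Function.update_self]
    simpa using ReflTransGen.update Tm.insp (fun _ j _ => StepT.inspC j) hPR'

theorem reflTransGen_sRed_of_stepT {nfq : Tr → Tr} {M N : Tm}
    (h : ReflTransGen StepT M N) : ReflTransGen (SRed nfq) M N :=
  ReflTransGen.mono (p := SRed nfq) (fun _ _ hs => Or.inr (.rel _ _ hs)) _ _ h

theorem reflTransGen_sRed_of_cRed {nf : Tm → Tm} (hnf : IsNFT nf) {nfq : Tr → Tr}
    (hq : IsNFQ nfq) {A B : Tm} (h : ReflTransGen (CRed nf) A B) (hA : NormalT A) :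
    ReflTransGen (SRed nfq) A B := by
  induction h using ReflTransGen.head_induction_on with
  | refl => exact .refl
  | head hstep _ ih =>
    obtain ⟨R, hR, rfl⟩ := hstep
    obtain ⟨P, hP, hPR⟩ := hR.exists_lBeta hq hA
    exact .head (Or.inl hP)
      ((reflTransGen_sRed_of_stepT (hPR.trans (hnf R).1)).trans (ih (hnf R).2))

/-- Relativized confluence of CAU⁻σ: if `M` reduces to `N` and `R`, and the στ-normal
forms of `N` and `R` are joinable in CAU⁻, then `N` and `R` are joinable in CAU⁻σ. -/
theorem relativized_confluence (nf : Tm → Tm) (hnf : IsNFT nf)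
    (nfq : Tr → Tr) (hq : IsNFQ nfq) :
    ∀ M N R : Tm,
      Relation.ReflTransGen (SRed nfq) M N →
      Relation.ReflTransGen (SRed nfq) M R →
      (∃ S, Relation.ReflTransGen (CRed nf) (nf N) S ∧
            Relation.ReflTransGen (CRed nf) (nf R) S) →
      ∃ T, Relation.ReflTransGen (SRed nfq) N T ∧
           Relation.ReflTransGen (SRed nfq) R T := by
  rintro - N R - - ⟨S, hNS, hRS⟩
  exact ⟨S,
    (reflTransGen_sRed_of_stepT (hnf N).1).trans (reflTransGen_sRed_of_cRed hnf hq hNS (hnf N).2),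
    (reflTransGen_sRed_of_stepT (hnf R).1).trans (reflTransGen_sRed_of_cRed hnf hq hRS (hnf R).2)⟩

end CAU
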